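/- arXiv:1804.08908 — 7 statements merged into one kernel-verified Lean document; each statement's English description precedes it below -/
import Mathlib

section
/- Let A and C be disjoint finite sets with |A| = d, and let σ be a uniformly random permutation of A ∪ C. Let A'(σ) denote the set of the first p elements of A in the order σ. Then the probability that some element of C appears before the last element of A'(σ) (i.e., min over v in C of σ(v) is less than max over u in A'(σ) of σ(u)) is at most 2·p·|C|/d, provided p ≤ d and d ≥ 2·p·|C| makes the bound meaningful (the inequality 2p|C|/d may exceed 1, in which case it is trivial). -/
open Finset

lemma aux_count {α : Type*} [LinearOrder α] {n : ℕ} (T : Finset α) (h : T.card = n) (i : Fin n) :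
    (T.filter (fun x => x < T.orderEmbOfFin h i)).card = i := by
  have heq : T.filter (fun x => x < T.orderEmbOfFin h i)
      = (univ.filter (fun a : Fin n => a < i)).image (T.orderEmbOfFin h) := by
    ext x
    simp only [mem_filter, mem_image, mem_univ, true_and]
    constructor
    · rintro ⟨hxT, hlt⟩
      obtain ⟨a, rfl⟩ := (Set.ext_iff.mp (T.range_orderEmbOfFin h) x).mpr hxT
      exact ⟨a, (OrderEmbedding.lt_iff_lt _).mp hlt, rfl⟩
    · rintro ⟨a, ha, rfl⟩
      exact ⟨T.orderEmbOfFin_mem h a, (OrderEmbedding.lt_iff_lt _).mpr ha⟩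
  rw [heq, card_image_of_injective _ (T.orderEmbOfFin h).injective]
  have h2 : univ.filter (fun a : Fin n => a < i) = Finset.Iio i := by
    ext a; simp
  rw [h2, Fin.card_Iio]

lemma step {V : Type*} [Fintype V] [DecidableEq V] {N d p : ℕ}
    (A : Finset V) (hd : A.card = d) (v : V) (hv : v ∉ A) :
    (d + 1) * (univ.filter (fun σ : V ≃ Fin N =>
        (A.filter (fun a => σ a < σ v)).card < p)).card
      ≤ p * Fintype.card (V ≃ Fin N) := by
  classical
  set S : Finset V := insert v A with hS
  have hScard : S.card = d + 1 := by rw [hS, card_insert_of_notMem hv, hd]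
  set T : (V ≃ Fin N) → Finset (Fin N) := fun σ => S.image σ with hTdef
  have hT : ∀ σ : V ≃ Fin N, (T σ).card = d + 1 := fun σ => by
    rw [hTdef]; simp only
    rw [card_image_of_injective _ σ.injective, hScard]
  set k : (V ≃ Fin N) → ℕ := fun σ => (A.filter (fun a => σ a < σ v)).card with hkdef
  have hk : ∀ σ, k σ < d + 1 := fun σ =>
    Nat.lt_succ_of_le (hd ▸ card_filter_le A _)
  set rk : (V ≃ Fin N) → Fin (d + 1) := fun σ => ⟨k σ, hk σ⟩ with hrkdef
  -- counting lemma relating k to positions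
  have hcount : ∀ σ : V ≃ Fin N, ((T σ).filter (fun x => x < σ v)).card = k σ := by
    intro σ
    have h1 : (T σ).filter (fun x => x < σ v)
        = (S.filter (fun a => σ a < σ v)).image σ := filter_image
    have h2 : S.filter (fun a => σ a < σ v) = A.filter (fun a => σ a < σ v) := by
      rw [hS, filter_insert, if_neg (lt_irrefl (σ v))]
    rw [h1, h2, card_image_of_injective _ σ.injective]
  -- the rank of σ v in T σ is k σ
  have hrank : ∀ σ : V ≃ Fin N, ((T σ).orderEmbOfFin (hT σ)) (rk σ) = σ v := by
    intro σ
    have hmem : σ v ∈ T σ := mem_image_of_mem _ (mem_insert_self v A)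
    obtain ⟨i, hi⟩ : ∃ i, (T σ).orderEmbOfFin (hT σ) i = σ v :=
      (Set.ext_iff.mp ((T σ).range_orderEmbOfFin (hT σ)) (σ v)).mpr hmem
    have h2 := aux_count (T σ) (hT σ) i
    rw [hi, hcount σ] at h2
    have h3 : rk σ = i := Fin.ext h2
    rw [h3, hi]
  -- the moving permutation
  set πa : ∀ (B : Finset (Fin N)), B.card = d + 1 → Fin (d+1) → Fin (d+1) → Equiv.Perm (Fin N) :=
    fun B hB r j => (Equiv.swap r j).extendDomain (B.orderIsoOfFin hB).toEquiv with hπdef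
  set π : (V ≃ Fin N) → Fin (d + 1) → Equiv.Perm (Fin N) :=
    fun σ j => πa (T σ) (hT σ) (rk σ) j with hπ2def
  have hπcongr : ∀ (B₁ B₂ : Finset (Fin N)) (h₁ : B₁.card = d+1) (h₂ : B₂.card = d+1)
      (r₁ r₂ j₁ j₂ : Fin (d+1)), B₁ = B₂ → r₁ = r₂ → j₁ = j₂ → πa B₁ h₁ r₁ j₁ = πa B₂ h₂ r₂ j₂ := by
    rintro B _ _ _ r _ j _ rfl rfl rfl; rfl
  -- π maps T σ to itself
  have himg : ∀ (σ : V ≃ Fin N) (j : Fin (d+1)), T (σ.trans (π σ j)) = T σ := by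
    intro σ j
    have h1 : T (σ.trans (π σ j)) = (T σ).image (π σ j) := by
      rw [hTdef]; simp only [Equiv.coe_trans]
      rw [← Finset.image_image]
    rw [h1]
    apply eq_of_subset_of_card_le
    · intro x hx
      obtain ⟨y, hy, rfl⟩ := mem_image.mp hx
      rw [hπ2def]; simp only
      rw [hπdef]; simp only
      rw [Equiv.Perm.extendDomain_apply_subtype _ _ hy]
      exact Subtype.coe_prop _
    · rw [card_image_of_injective _ (π σ j).injective]
  -- position of v after moving
  have happ : ∀ (σ : V ≃ Fin N) (j : Fin (d+1)),
      (σ.trans (π σ j)) v = (T σ).orderEmbOfFin (hT σ) j := by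
    intro σ j
    have h0 : σ v = ((((T σ).orderIsoOfFin (hT σ)).toEquiv) (rk σ) : Fin N) := by
      rw [← hrank σ]; rfl
    have h1 : (σ.trans (π σ j)) v = π σ j (σ v) := rfl
    rw [h1, h0, hπ2def]; simp only
    rw [hπdef]; simp only
    rw [Equiv.Perm.extendDomain_apply_image]
    rw [Equiv.swap_apply_left]
    rfl
  -- the new rank is j
  have hkey : ∀ (σ : V ≃ Fin N) (j : Fin (d+1)), k (σ.trans (π σ j)) = j.val := by
    intro σ j
    have h1 := hcount (σ.trans (π σ j))
    rw [himg σ j, happ σ j] at h1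
    rw [← h1, aux_count]
  -- the injection
  have hinj : ((univ : Finset (Fin (d+1))) ×ˢ
        (univ.filter (fun σ : V ≃ Fin N => k σ < p))).card
      ≤ ((Finset.range p) ×ˢ (univ : Finset (V ≃ Fin N))).card := by
    apply Finset.card_le_card_of_injOn (fun x => (k x.2, x.2.trans (π x.2 x.1)))
    · rintro ⟨j, σ⟩ hx
      simp only [mem_coe, mem_product, mem_univ, mem_filter, true_and] at hx
      simp only [mem_coe, mem_product, mem_range, mem_univ, and_true]
      exact hx
    · rintro ⟨j₁, σ₁⟩ _ ⟨j₂, σ₂⟩ _ heq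
      simp only [Prod.mk.injEq] at heq
      obtain ⟨hk12, hσ12⟩ := heq
      have hT12 : T σ₁ = T σ₂ := by rw [← himg σ₁ j₁, ← himg σ₂ j₂, hσ12]
      have hj12 : j₁ = j₂ := Fin.ext (by rw [← hkey σ₁ j₁, ← hkey σ₂ j₂, hσ12])
      have hrk12 : rk σ₁ = rk σ₂ := Fin.ext hk12
      have hπ12 : π σ₁ j₁ = π σ₂ j₂ :=
        hπcongr _ _ _ _ _ _ _ _ hT12 hrk12 hj12
      have hσ : σ₁ = σ₂ := by
        have := congrArg (fun e => e.trans (π σ₂ j₂).symm) hσ12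
        simpa [hπ12, Equiv.trans_assoc] using this
      exact Prod.ext hj12 hσ
  rw [card_product, card_product, card_univ, Fintype.card_fin, card_range, card_univ] at hinj
  exact hinj


open Finset in
open scoped Classical in
/-- For disjoint finite sets `A`, `C` whose union is the whole (finite) vertex
set, with `|A| = d`, and a uniformly random permutation `σ` of `A ∪ C` (a uniformly random
bijection onto positions `Fin (d + |C|)`), let `A'(σ)` be the set of the first `p` elements
of `A` in the order `σ` (those whose position among elements of `A` is one of the `p`
smallest).  Then the probability that some element of `C` appears before the last element of
`A'(σ)`, i.e. `min_{v ∈ C} σ v < max_{u ∈ A'(σ)} σ u`, is at most `2·p·|C| / d`. -/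
theorem stmt0 {V : Type*} [Fintype V] [DecidableEq V] (A C : Finset V)
    (hAC : Disjoint A C) (hcover : A ∪ C = Finset.univ)
    (d p : ℕ) (hd : A.card = d) (hp : 1 ≤ p) (hpd : p ≤ d) :
    letI A' : (V ≃ Fin (d + C.card)) → Finset V := fun σ =>
      A.filter (fun u => (A.filter (fun a => σ a < σ u)).card < p)
    ((Finset.univ.filter (fun σ : V ≃ Fin (d + C.card) =>
        ∃ v ∈ C, ∃ u ∈ A' σ, σ v < σ u)).card : ℝ)
      / (Fintype.card (V ≃ Fin (d + C.card)) : ℝ) ≤ 2 * p * C.card / d := by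
  dsimp only
  set N := d + C.card with hN
  have hcardV : Fintype.card V = N := by
    rw [← card_univ, ← hcover, card_union_of_disjoint hAC, hd]
  have hNfac : Fintype.card (V ≃ Fin N) = N.factorial := by
    rw [Fintype.card_equiv (Fintype.equivFinOfCardEq hcardV), hcardV]
  have hd1 : 0 < d := lt_of_lt_of_le hp hpd
  have hposfac : (0:ℝ) < (Fintype.card (V ≃ Fin N) : ℝ) := by
    rw [hNfac]; exact_mod_cast N.factorial_pos
  rw [div_le_div_iff₀ hposfac (by exact_mod_cast hd1)]
  have hsub : (Finset.univ.filter (fun σ : V ≃ Fin N =>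
        ∃ v ∈ C, ∃ u ∈ A.filter (fun u => (A.filter (fun a => σ a < σ u)).card < p), σ v < σ u))
      ⊆ C.biUnion (fun v => Finset.univ.filter
        (fun σ : V ≃ Fin N => (A.filter (fun a => σ a < σ v)).card < p)) := by
    intro σ hσ
    rw [mem_filter] at hσ
    obtain ⟨-, v, hvC, u, hu, hlt⟩ := hσ
    rw [mem_filter] at hu
    refine mem_biUnion.mpr ⟨v, hvC, mem_filter.mpr ⟨mem_univ _, ?_⟩⟩
    refine lt_of_le_of_lt (card_le_card ?_) hu.2
    intro a ha
    rw [mem_filter] at ha ⊢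
    exact ⟨ha.1, ha.2.trans hlt⟩
  have hkey : (Finset.univ.filter (fun σ : V ≃ Fin N =>
        ∃ v ∈ C, ∃ u ∈ A.filter (fun u => (A.filter (fun a => σ a < σ u)).card < p), σ v < σ u)).card
        * d ≤ 2 * p * C.card * N.factorial := by
    have h1 := card_le_card hsub
    have h2 := card_biUnion_le (s := C) (t := fun v => Finset.univ.filter
        (fun σ : V ≃ Fin N => (A.filter (fun a => σ a < σ v)).card < p))
    have h3 : ∀ v ∈ C, (d + 1) * (Finset.univ.filter
        (fun σ : V ≃ Fin N => (A.filter (fun a => σ a < σ v)).card < p)).card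
        ≤ p * N.factorial := by
      intro v hvC
      have := step (N := N) (p := p) A hd v (disjoint_right.mp hAC hvC)
      rwa [hNfac] at this
    calc (Finset.univ.filter (fun σ : V ≃ Fin N =>
        ∃ v ∈ C, ∃ u ∈ A.filter (fun u => (A.filter (fun a => σ a < σ u)).card < p), σ v < σ u)).card * d
        ≤ (d + 1) * (C.biUnion (fun v => Finset.univ.filter
          (fun σ : V ≃ Fin N => (A.filter (fun a => σ a < σ v)).card < p))).card := by
          rw [mul_comm]
          exact Nat.mul_le_mul (Nat.le_succ d) h1
      _ ≤ (d + 1) * ∑ v ∈ C, (Finset.univ.filter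
          (fun σ : V ≃ Fin N => (A.filter (fun a => σ a < σ v)).card < p)).card :=
          Nat.mul_le_mul_left _ h2
      _ = ∑ v ∈ C, (d + 1) * (Finset.univ.filter
          (fun σ : V ≃ Fin N => (A.filter (fun a => σ a < σ v)).card < p)).card := by
          rw [mul_sum]
      _ ≤ ∑ v ∈ C, p * N.factorial := sum_le_sum h3
      _ = C.card * (p * N.factorial) := by rw [sum_const, smul_eq_mul]
      _ ≤ 2 * (C.card * (p * N.factorial)) := Nat.le_mul_of_pos_left _ (by norm_num)
      _ = 2 * p * C.card * N.factorial := by ring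
  calc ((Finset.univ.filter (fun σ : V ≃ Fin N =>
        ∃ v ∈ C, ∃ u ∈ A.filter (fun u => (A.filter (fun a => σ a < σ u)).card < p), σ v < σ u)).card : ℝ) * d
      ≤ (2 * p * C.card * N.factorial : ℕ) := by exact_mod_cast hkey
    _ = 2 * p * C.card * (Fintype.card (V ≃ Fin N) : ℝ) := by rw [hNfac]; push_cast; ring
end

section
/- For integers d, b ≥ 0 and 1 ≤ p ≤ d, k ≤ b: in a uniformly random permutation of a set A of size d together with a set B of size b, the probability that at least k elements of B appear before the p-th element of A equals ∑_{t=k}^{b} C(p−1+t, t)·C(d−p+b−t, b−t) / C(d+b, d). -/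
open Finset
open scoped Classical



section aux
variable {n : ℕ}

lemma card_filter_lt_strictmono {S : Finset (Fin n)} {i i' : Fin n}
    (hi : i ∈ S) (hlt : i < i') :
    (S.filter (fun j => j < i)).card < (S.filter (fun j => j < i')).card := by
  have hsub : insert i (S.filter (fun j => j < i)) ⊆ S.filter (fun j => j < i') := by
    intro x hx
    rcases Finset.mem_insert.mp hx with rfl | hx
    · exact mem_filter.mpr ⟨hi, hlt⟩
    · rcases mem_filter.mp hx with ⟨h1, h2⟩
      exact mem_filter.mpr ⟨h1, h2.trans hlt⟩
  have hni : i ∉ S.filter (fun j => j < i) := by simp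
  have := card_le_card hsub
  rw [card_insert_of_notMem hni] at this
  omega

lemma pth_unique {S : Finset (Fin n)} {q : ℕ} {i i' : Fin n}
    (hi : i ∈ S) (hi' : i' ∈ S)
    (h : (S.filter (fun j => j < i)).card = q)
    (h' : (S.filter (fun j => j < i')).card = q) : i = i' := by
  rcases lt_trichotomy i i' with hlt | heq | hlt
  · have := card_filter_lt_strictmono hi hlt; omega
  · exact heq
  · have := card_filter_lt_strictmono hi' hlt; omega

/-- decomposition of `i.val` as elements below `i` inside and outside `S`. -/
lemma filter_lt_split (S : Finset (Fin n)) (i : Fin n) :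
    (S.filter (fun j => j < i)).card + (Sᶜ.filter (fun j => j < i)).card = i.val := by
  have h1 : (S.filter (fun j => j < i)) ∪ (Sᶜ.filter (fun j => j < i)) = Finset.Iio i := by
    ext x
    simp [Finset.mem_Iio, or_comm]
    tauto
  have h2 : Disjoint (S.filter (fun j => j < i)) (Sᶜ.filter (fun j => j < i)) := by
    apply Finset.disjoint_filter_filter
    exact disjoint_compl_right
  have := Finset.card_union_of_disjoint h2
  rw [h1] at this
  rw [← this, Fin.card_Iio]

end aux


lemma count_sets_pth {n d p : ℕ} (hp : 1 ≤ p) (hpd : p ≤ d) (i0 : Fin n) :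
    ((univ : Finset (Finset (Fin n))).filter
        (fun S => S.card = d ∧ i0 ∈ S ∧ (S.filter (fun j => j < i0)).card = p - 1)).card
      = (i0.val).choose (p - 1) * (n - 1 - i0.val).choose (d - p) := by
  rw [← Fin.card_Ioi (a := i0), ← Fin.card_Iio (b := i0),
    ← Finset.card_powersetCard, ← Finset.card_powersetCard, ← Finset.card_product]
  refine Finset.card_bij'
    (fun S _ => (S.filter (fun j => j < i0), S.filter (fun j => i0 < j)))
    (fun X _ => insert i0 (X.1 ∪ X.2)) ?_ ?_ ?_ ?_
  · -- hi : maps into target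
    intro S hS
    simp only [mem_filter, mem_univ, true_and] at hS
    obtain ⟨hcard, hmem, hbelow⟩ := hS
    have hpart : S = (S.filter (fun j => j < i0)) ∪ {i0} ∪ (S.filter (fun j => i0 < j)) := by
      ext x
      simp only [mem_union, mem_filter, mem_singleton]
      constructor
      · intro hx
        rcases lt_trichotomy x i0 with h | h | h
        · exact Or.inl (Or.inl ⟨hx, h⟩)
        · exact Or.inl (Or.inr h)
        · exact Or.inr ⟨hx, h⟩
      · rintro ((⟨h, _⟩ | rfl) | ⟨h, _⟩) <;> first | exact h | exact hmem
    have hd1 : Disjoint ((S.filter (fun j => j < i0)) ∪ {i0}) (S.filter (fun j => i0 < j)) := by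
      rw [Finset.disjoint_left]
      intro x hx hx'
      simp only [mem_filter] at hx'
      rcases mem_union.mp hx with hx | hx
      · simp only [mem_filter] at hx
        exact absurd (hx.2.trans hx'.2) (lt_irrefl x)
      · simp only [mem_singleton] at hx
        subst hx
        exact absurd hx'.2 (lt_irrefl _)
    have hd2 : Disjoint (S.filter (fun j => j < i0)) ({i0} : Finset (Fin n)) := by
      simp only [Finset.disjoint_right, mem_singleton]
      rintro x rfl hx
      simp at hx
    have hcards : (S.filter (fun j => j < i0)).card + 1 + (S.filter (fun j => i0 < j)).card
        = d := by
      rw [← hcard]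
      conv_rhs => rw [hpart]
      rw [card_union_of_disjoint hd1, card_union_of_disjoint hd2, card_singleton]
    simp only [Finset.mem_product, Finset.mem_powersetCard]
    refine ⟨⟨fun x hx => ?_, hbelow⟩, fun x hx => ?_, by omega⟩
    · simp only [mem_filter] at hx; simpa using hx.2
    · simp only [mem_filter] at hx; simpa using hx.2
  · -- hj : inverse maps into source
    rintro ⟨X, Y⟩ hXY
    simp only [Finset.mem_product, Finset.mem_powersetCard] at hXY
    obtain ⟨⟨hXsub, hXcard⟩, hYsub, hYcard⟩ := hXY
    have hXlt : ∀ x ∈ X, x < i0 := fun x hx => by simpa using hXsub hx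
    have hYgt : ∀ y ∈ Y, i0 < y := fun y hy => by simpa using hYsub hy
    have hi0X : i0 ∉ X := fun h => lt_irrefl i0 (hXlt _ h)
    have hi0Y : i0 ∉ Y := fun h => lt_irrefl i0 (hYgt _ h)
    have hdXY : Disjoint X Y := by
      rw [Finset.disjoint_left]
      intro x hx hy
      exact absurd ((hXlt x hx).trans (hYgt x hy)) (lt_irrefl x)
    simp only [mem_filter, mem_univ, true_and]
    refine ⟨?_, mem_insert_self _ _, ?_⟩
    · rw [card_insert_of_notMem (by simp [hi0X, hi0Y]),
        card_union_of_disjoint hdXY, hXcard, hYcard]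
      omega
    · have : (insert i0 (X ∪ Y)).filter (fun j => j < i0) = X := by
        ext x
        simp only [mem_filter, mem_insert, mem_union]
        constructor
        · rintro ⟨rfl | hx | hx, hlt⟩
          · exact absurd hlt (lt_irrefl _)
          · exact hx
          · exact absurd (hYgt _ hx) (asymm hlt)
        · intro hx; exact ⟨Or.inr (Or.inl hx), hXlt _ hx⟩
      rw [this, hXcard]
  · -- left inverse
    intro S hS
    simp only [mem_filter, mem_univ, true_and] at hS
    obtain ⟨hcard, hmem, _⟩ := hS
    ext x
    simp only [mem_insert, mem_union, mem_filter]
    constructor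
    · rintro (rfl | ⟨hx, _⟩ | ⟨hx, _⟩) <;> first | exact hmem | exact hx
    · intro hx
      rcases lt_trichotomy x i0 with h | h | h
      · exact Or.inr (Or.inl ⟨hx, h⟩)
      · exact Or.inl h
      · exact Or.inr (Or.inr ⟨hx, h⟩)
  · -- right inverse
    rintro ⟨X, Y⟩ hXY
    simp only [Finset.mem_product, Finset.mem_powersetCard] at hXY
    obtain ⟨⟨hXsub, _⟩, hYsub, _⟩ := hXY
    have hXlt : ∀ x ∈ X, x < i0 := fun x hx => by simpa using hXsub hx
    have hYgt : ∀ y ∈ Y, i0 < y := fun y hy => by simpa using hYsub hy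
    refine Prod.ext ?_ ?_
    · ext x
      simp only [mem_filter, mem_insert, mem_union]
      constructor
      · rintro ⟨rfl | hx | hx, hlt⟩
        · exact absurd hlt (lt_irrefl _)
        · exact hx
        · exact absurd (hYgt _ hx) (asymm hlt)
      · intro hx; exact ⟨Or.inr (Or.inl hx), hXlt _ hx⟩
    · ext x
      simp only [mem_filter, mem_insert, mem_union]
      constructor
      · rintro ⟨rfl | hx | hx, hlt⟩
        · exact absurd hlt (lt_irrefl _)
        · exact absurd (hXlt _ hx) (asymm hlt)
        · exact hx
      · intro hx; exact ⟨Or.inr (Or.inr hx), hYgt _ hx⟩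


lemma compl_image {V : Type*} [Fintype V] [DecidableEq V] (A B : Finset V)
    (hAB : Disjoint A B) (hcover : A ∪ B = univ) {n : ℕ} (σ : V ≃ Fin n) :
    (A.image σ)ᶜ = B.image σ := by
  ext j
  simp only [Finset.mem_compl, Finset.mem_image]
  constructor
  · intro h
    refine ⟨σ.symm j, ?_, by simp⟩
    have hmem : σ.symm j ∈ A ∪ B := hcover ▸ mem_univ _
    rcases mem_union.mp hmem with h' | h'
    · exact absurd ⟨σ.symm j, h', by simp⟩ h
    · exact h'
  · rintro ⟨v, hv, rfl⟩ ⟨a, ha, hav⟩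
    have := σ.injective hav
    subst this
    exact (Finset.disjoint_left.mp hAB ha) hv

lemma event_iff {V : Type*} [Fintype V] [DecidableEq V] (A B : Finset V)
    (hAB : Disjoint A B) (hcover : A ∪ B = univ) {n p k : ℕ} (σ : V ≃ Fin n) :
    (∃ a ∈ A, (A.filter (fun a' => σ a' < σ a)).card = p - 1 ∧
        k ≤ (B.filter (fun v => σ v < σ a)).card)
      ↔ ∃ i ∈ A.image σ, ((A.image σ).filter (fun j => j < i)).card = p - 1 ∧
          p - 1 + k ≤ i.val := by
  have key : ∀ i : Fin n,
      ((A.image σ).filter (fun j => j < i)).card = (A.filter (fun a' => σ a' < i)).card ∧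
      (((A.image σ)ᶜ).filter (fun j => j < i)).card = (B.filter (fun v => σ v < i)).card := by
    intro i
    constructor
    · rw [Finset.filter_image, Finset.card_image_of_injective _ σ.injective]
    · rw [compl_image A B hAB hcover, Finset.filter_image,
        Finset.card_image_of_injective _ σ.injective]
  constructor
  · rintro ⟨a, ha, h1, h2⟩
    refine ⟨σ a, Finset.mem_image_of_mem _ ha, ?_, ?_⟩
    · rw [(key (σ a)).1]; exact h1
    · have hsplit := filter_lt_split (A.image σ) (σ a)
      rw [(key (σ a)).1, (key (σ a)).2, h1] at hsplit
      omega
  · rintro ⟨i, hi, h1, h2⟩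
    rcases Finset.mem_image.mp hi with ⟨a, ha, rfl⟩
    refine ⟨a, ha, ?_, ?_⟩
    · rw [← (key (σ a)).1]; exact h1
    · have hsplit := filter_lt_split (A.image σ) (σ a)
      rw [(key (σ a)).1, (key (σ a)).2] at hsplit
      rw [(key (σ a)).1] at h1
      omega

lemma image_eq_iff {V : Type*} [Fintype V] [DecidableEq V] (A : Finset V) {n : ℕ}
    (S : Finset (Fin n)) (hS : S.card = A.card) (σ : V ≃ Fin n) :
    A.image σ = S ↔ ∀ v, v ∈ A ↔ σ v ∈ S := by
  constructor
  · intro h v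
    constructor
    · intro hv; rw [← h]; exact Finset.mem_image_of_mem _ hv
    · intro hv; rw [← h] at hv
      rcases Finset.mem_image.mp hv with ⟨a, ha, hav⟩
      rwa [← σ.injective hav]
  · intro h
    ext j
    rw [Finset.mem_image]
    constructor
    · rintro ⟨a, ha, rfl⟩; exact (h a).mp ha
    · intro hj; exact ⟨σ.symm j, (h _).mpr (by simpa using hj), by simp⟩

lemma fiber_count {V : Type*} [Fintype V] [DecidableEq V] (A : Finset V) {n : ℕ}
    (hV : Fintype.card V = n) (S : Finset (Fin n)) (hS : S.card = A.card) :
    (univ.filter (fun σ : V ≃ Fin n => A.image σ = S)).card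
      = A.card.factorial * (n - A.card).factorial := by
  have h1 : (univ.filter (fun σ : V ≃ Fin n => A.image σ = S)).card
      = Fintype.card {σ : V ≃ Fin n // ∀ v, v ∈ A ↔ σ v ∈ S} := by
    rw [Fintype.card_subtype]
    apply Finset.card_bij (fun σ _ => σ)
    · intro σ hσ
      simp only [mem_filter, mem_univ, true_and] at hσ ⊢
      exact (image_eq_iff A S hS σ).mp hσ
    · intro a b _ _ h; exact h
    · intro σ hσ
      simp only [mem_filter, mem_univ, true_and] at hσ
      exact ⟨σ, by simp [mem_filter, (image_eq_iff A S hS σ).mpr hσ], rfl⟩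
  rw [h1]
  have E : {σ : V ≃ Fin n // ∀ v, v ∈ A ↔ σ v ∈ S} ≃
      ({v // v ∈ A} ≃ {j // j ∈ S}) × ({v // v ∉ A} ≃ {j // j ∉ S}) :=
  { toFun := fun σ => ⟨σ.1.subtypeEquiv σ.2,
      σ.1.subtypeEquiv (fun v => not_iff_not.mpr (σ.2 v))⟩
    invFun := fun fg => ⟨(Equiv.sumCompl (· ∈ A)).symm.trans
        ((fg.1.sumCongr fg.2).trans (Equiv.sumCompl (· ∈ S))), by
      intro v
      by_cases hv : v ∈ A
      · simp [hv, Equiv.sumCompl_symm_apply_of_pos hv, (fg.1 ⟨v, hv⟩).2]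
      · simp [hv, Equiv.sumCompl_symm_apply_of_neg hv, (fg.2 ⟨v, hv⟩).2]⟩
    left_inv := by
      rintro ⟨σ, hσ⟩
      ext v
      by_cases hv : v ∈ A
      · simp [Equiv.sumCompl_symm_apply_of_pos hv]
      · simp [Equiv.sumCompl_symm_apply_of_neg hv]
    right_inv := by
      rintro ⟨f, g⟩
      refine Prod.ext ?_ ?_
      · ext ⟨v, hv⟩
        simp [Equiv.sumCompl_symm_apply_of_pos hv]
      · ext ⟨v, hv⟩
        simp [Equiv.sumCompl_symm_apply_of_neg hv] }
  rw [Fintype.card_congr E, Fintype.card_prod]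
  have cA : Fintype.card {v // v ∈ A} = A.card := Fintype.card_coe A
  have cS : Fintype.card {j // j ∈ S} = A.card := by rw [Fintype.card_coe, hS]
  have cA' : Fintype.card {v // v ∉ A} = n - A.card := by
    rw [Fintype.card_subtype_compl, cA, hV]
  have cS' : Fintype.card {j // j ∉ S} = n - A.card := by
    rw [Fintype.card_subtype_compl, Fintype.card_coe, hS, Fintype.card_fin]
  have e1 : {v // v ∈ A} ≃ {j // j ∈ S} := Fintype.equivOfCardEq (by rw [cA, cS])
  have e2 : {v // v ∉ A} ≃ {j // j ∉ S} := Fintype.equivOfCardEq (by rw [cA', cS'])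
  rw [Fintype.card_equiv e1, Fintype.card_equiv e2, cA, cA']


lemma goodsets_count {n d b p k : ℕ} (hn : n = d + b) (hp : 1 ≤ p) (hpd : p ≤ d)
    (hk : k ≤ b) :
    ((univ : Finset (Finset (Fin n))).filter
        (fun S => S.card = d ∧ ∃ i ∈ S, (S.filter (fun j => j < i)).card = p - 1 ∧
          p - 1 + k ≤ i.val)).card
      = ∑ t ∈ Finset.Icc k b, (p - 1 + t).choose t * (d - p + b - t).choose (b - t) := by
  set g : Finset (Fin n) → ℕ := fun S =>
    if h : ∃ i ∈ S, (S.filter (fun j => j < i)).card = p - 1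
    then (h.choose).val - (p - 1) else 0 with hg
  have gspec : ∀ (S : Finset (Fin n)) (i : Fin n), i ∈ S →
      (S.filter (fun j => j < i)).card = p - 1 → g S = i.val - (p - 1) := by
    intro S i hi hcard
    have h : ∃ i ∈ S, (S.filter (fun j => j < i)).card = p - 1 := ⟨i, hi, hcard⟩
    rw [hg]
    simp only [dif_pos h]
    obtain ⟨hmem, hc⟩ := h.choose_spec
    rw [pth_unique hmem hi hc hcard]
  -- value bound facts
  have ival_facts : ∀ (S : Finset (Fin n)) (i : Fin n), i ∈ S → S.card = d →
      (S.filter (fun j => j < i)).card = p - 1 → p - 1 ≤ i.val ∧ i.val ≤ p - 1 + b := by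
    intro S i hi hS hcard
    have hsplit := filter_lt_split S i
    have hcompl : (Sᶜ.filter (fun j => j < i)).card ≤ b := by
      calc (Sᶜ.filter (fun j => j < i)).card ≤ Sᶜ.card := Finset.card_filter_le _ _
        _ = n - d := by rw [Finset.card_compl, hS, Fintype.card_fin]
        _ = b := by omega
    omega
  rw [Finset.card_eq_sum_card_fiberwise (f := g) (t := Finset.Icc k b) ?_]
  · apply Finset.sum_congr rfl
    intro t ht
    rcases Finset.mem_Icc.mp ht with ⟨hkt, htb⟩
    have hi0 : p - 1 + t < n := by omega
    set i0 : Fin n := ⟨p - 1 + t, hi0⟩ with hi0def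
    have : (univ.filter (fun S : Finset (Fin n) => S.card = d ∧ ∃ i ∈ S,
        (S.filter (fun j => j < i)).card = p - 1 ∧ p - 1 + k ≤ i.val)).filter
        (fun S => g S = t)
        = univ.filter (fun S => S.card = d ∧ i0 ∈ S ∧
            (S.filter (fun j => j < i0)).card = p - 1) := by
      ext S
      simp only [Finset.mem_filter, Finset.mem_univ, true_and]
      constructor
      · rintro ⟨⟨hS, i, hi, hcard, hik⟩, hgt⟩
        rw [gspec S i hi hcard] at hgt
        have hb := ival_facts S i hi hS hcard
        have : i = i0 := by
          apply Fin.ext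
          simp only [hi0def]
          omega
        subst this
        exact ⟨hS, hi, hcard⟩
      · rintro ⟨hS, hi, hcard⟩
        have hv : (i0 : ℕ) = p - 1 + t := rfl
        refine ⟨⟨hS, i0, hi, hcard, by omega⟩, ?_⟩
        rw [gspec S i0 hi hcard]
        omega
    rw [this, count_sets_pth hp hpd i0]
    have hv : (i0 : ℕ) = p - 1 + t := rfl
    have e1 : (i0 : ℕ).choose (p - 1) = (p - 1 + t).choose t := by
      have h3 := Nat.choose_symm (Nat.le_add_left t (p - 1))
      rw [Nat.add_sub_cancel] at h3
      rw [hv]; exact h3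
    have e2 : (n - 1 - (i0 : ℕ)).choose (d - p) = (d - p + b - t).choose (b - t) := by
      have h1 : n - 1 - (i0 : ℕ) = d - p + b - t := by omega
      have hsum : d - p + b - t = (d - p) + (b - t) := by omega
      have h3 := Nat.choose_symm (Nat.le_add_left (b - t) (d - p))
      rw [Nat.add_sub_cancel] at h3
      rw [h1, hsum]; exact h3
    rw [e1, e2]
  · intro S hS
    simp only [Finset.mem_coe, Finset.mem_filter, Finset.mem_univ, true_and] at hS
    obtain ⟨hScard, i, hi, hcard, hik⟩ := hS
    rw [gspec S i hi hcard]
    have hb := ival_facts S i hi hScard hcard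
    rw [Finset.mem_coe, Finset.mem_Icc]
    omega

open Finset in
open scoped Classical in
/-- For disjoint finite sets `A`, `B` covering the vertex set, `|A| = d`,
`|B| = b`, `1 ≤ p ≤ d` and `k ≤ b`: the probability, over a uniformly random permutation of
`A ∪ B`, that at least `k` elements of `B` appear before the `p`-th element of `A` (the
element of `A` with the `p`-th smallest position among elements of `A`) equals
`∑_{t=k}^{b} C(p-1+t, t)·C(d-p+b-t, b-t) / C(d+b, d)`. -/
theorem stmt2 {V : Type*} [Fintype V] [DecidableEq V] (A B : Finset V)
    (hAB : Disjoint A B) (hcover : A ∪ B = Finset.univ)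
    (d b p k : ℕ) (hd : A.card = d) (hb : B.card = b)
    (hp : 1 ≤ p) (hpd : p ≤ d) (hk : k ≤ b) :
    ((Finset.univ.filter (fun σ : V ≃ Fin (d + b) =>
        ∃ a ∈ A, (A.filter (fun a' => σ a' < σ a)).card = p - 1 ∧
          k ≤ (B.filter (fun v => σ v < σ a)).card)).card : ℝ)
      / (Fintype.card (V ≃ Fin (d + b)) : ℝ)
      = ∑ t ∈ Finset.Icc k b,
          ((p - 1 + t).choose t : ℝ) * ((d - p + b - t).choose (b - t) : ℝ)
            / ((d + b).choose d : ℝ) := by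
  have hV : Fintype.card V = d + b := by
    rw [← Finset.card_univ, ← hcover, Finset.card_union_of_disjoint hAB, hd, hb]
  have htot : Fintype.card (V ≃ Fin (d + b)) = (d + b).factorial := by
    rw [Fintype.card_equiv (Fintype.equivFinOfCardEq hV), hV]
  have hF : (Finset.univ.filter (fun σ : V ≃ Fin (d + b) =>
        ∃ a ∈ A, (A.filter (fun a' => σ a' < σ a)).card = p - 1 ∧
          k ≤ (B.filter (fun v => σ v < σ a)).card)).card
      = (∑ t ∈ Finset.Icc k b, (p - 1 + t).choose t * (d - p + b - t).choose (b - t))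
          * (d.factorial * b.factorial) := by
    set GoodSets := univ.filter (fun S : Finset (Fin (d + b)) => S.card = d ∧ ∃ i ∈ S,
          (S.filter (fun j => j < i)).card = p - 1 ∧ p - 1 + k ≤ i.val) with hGS
    have hmem : ∀ σ ∈ (Finset.univ.filter (fun σ : V ≃ Fin (d + b) =>
        ∃ a ∈ A, (A.filter (fun a' => σ a' < σ a)).card = p - 1 ∧
          k ≤ (B.filter (fun v => σ v < σ a)).card)), A.image σ ∈ GoodSets := by
      intro σ hσ
      simp only [Finset.mem_filter, Finset.mem_univ, true_and] at hσ
      rw [hGS]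
      simp only [Finset.mem_filter, Finset.mem_univ, true_and]
      refine ⟨by rw [Finset.card_image_of_injective _ σ.injective, hd], ?_⟩
      exact (event_iff A B hAB hcover σ).mp hσ
    rw [Finset.card_eq_sum_card_fiberwise hmem]
    rw [← goodsets_count (n := d + b) rfl hp hpd hk, ← hGS]
    rw [Finset.card_eq_sum_ones GoodSets, Finset.sum_mul, one_mul]
    apply Finset.sum_congr rfl
    intro S hS
    rw [hGS] at hS
    simp only [Finset.mem_filter, Finset.mem_univ, true_and] at hS
    obtain ⟨hScard, hSgood⟩ := hS
    have hsame : (Finset.univ.filter (fun σ : V ≃ Fin (d + b) =>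
        ∃ a ∈ A, (A.filter (fun a' => σ a' < σ a)).card = p - 1 ∧
          k ≤ (B.filter (fun v => σ v < σ a)).card)).filter
            (fun σ : V ≃ Fin (d + b) => A.image σ = S)
        = univ.filter (fun σ : V ≃ Fin (d + b) => A.image σ = S) := by
      ext σ
      simp only [Finset.mem_filter, Finset.mem_univ, true_and]
      constructor
      · rintro ⟨_, h⟩; exact h
      · intro h
        refine ⟨(event_iff A B hAB hcover σ).mpr ?_, h⟩
        rw [h]; exact hSgood
    rw [hsame, fiber_count A hV S (by rw [hScard, hd])]
    rw [hd]
    congr 2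
    omega
  rw [htot, hF, ← Finset.sum_div]
  have hC : ((d + b).choose d) * (d.factorial * b.factorial) = (d + b).factorial := by
    have h1 := Nat.choose_mul_factorial_mul_factorial (show d ≤ d + b by omega)
    have h2 : d + b - d = b := by omega
    rw [h2] at h1
    rw [← h1]; ring
  have hCpos : (0:ℝ) < ((d + b).choose d : ℝ) := by
    exact_mod_cast Nat.choose_pos (show d ≤ d + b by omega)
  have hfpos : (0:ℝ) < ((d + b).factorial : ℝ) := by
    exact_mod_cast Nat.factorial_pos _
  rw [div_eq_div_iff (ne_of_gt hfpos) (ne_of_gt hCpos)]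
  push_cast
  have hCr : ((d + b).choose d : ℝ) * ((d.factorial : ℝ) * (b.factorial : ℝ))
      = ((d + b).factorial : ℝ) := by exact_mod_cast hC
  rw [← hCr]
  ring
end

section
/- For integers d, b ≥ 0, 1 ≤ p ≤ d, and 1 ≤ k ≤ b: C(p−1+b, b)·C(d−p+b−k+1, d−p+1) / C(d+b, d) ≤ C(d, p−1)·((d−p+b−k+1)/(d+b))^{d−p+1}. -/
lemma key_ratio (q m n : ℕ) (hmn : m ≤ n) (hn : 0 < n) :
    (m.choose q : ℝ) / n.choose q ≤ ((m : ℝ) / n) ^ q := by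
  induction q with
  | zero => simp
  | succ q ih =>
    rcases lt_or_ge m (q + 1) with h | h
    · rw [Nat.choose_eq_zero_of_lt h]
      have : (0:ℝ) ≤ ((m : ℝ) / n) ^ (q+1) := by positivity
      simpa using this
    · have hqm : q ≤ m := Nat.le_of_succ_le h
      have hqn1 : q + 1 ≤ n := le_trans h hmn
      have hqn : q < n := hqn1
      have hcn : (0:ℝ) < (n.choose q : ℝ) := by
        exact_mod_cast Nat.choose_pos (le_of_lt hqn)
      have hcn1 : (0:ℝ) < (n.choose (q+1) : ℝ) := by
        exact_mod_cast Nat.choose_pos hqn1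
      have h1 : (m.choose (q+1) : ℝ) * (q+1) = m.choose q * ((m : ℝ) - q) := by
        have h2 : ((m.choose (q+1) * (q+1) : ℕ) : ℝ) = ((m.choose q * (m - q) : ℕ) : ℝ) := by
          exact_mod_cast congrArg (fun x : ℕ => (x : ℝ)) (Nat.choose_succ_right_eq m q)
        push_cast [Nat.cast_sub hqm] at h2
        linarith
      have h2 : (n.choose (q+1) : ℝ) * (q+1) = n.choose q * ((n : ℝ) - q) := by
        have h2 : ((n.choose (q+1) * (q+1) : ℕ) : ℝ) = ((n.choose q * (n - q) : ℕ) : ℝ) := by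
          exact_mod_cast congrArg (fun x : ℕ => (x : ℝ)) (Nat.choose_succ_right_eq n q)
        push_cast [Nat.cast_sub (le_of_lt hqn)] at h2
        linarith
      have hq : (q:ℝ) < (n:ℝ) := by exact_mod_cast hqn
      have hnq : (0:ℝ) < (n:ℝ) - q := by linarith
      have hmq : (0:ℝ) ≤ (m:ℝ) - q := by
        have : (q:ℝ) ≤ (m:ℝ) := by exact_mod_cast hqm
        linarith
      have hnr : (0:ℝ) < (n:ℝ) := by exact_mod_cast hn
      have heq : (m.choose (q+1) : ℝ) / n.choose (q+1)
          = ((m.choose q : ℝ) / n.choose q) * (((m:ℝ) - q) / ((n:ℝ) - q)) := by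
        rw [div_mul_div_comm, div_eq_div_iff hcn1.ne' (by positivity)]
        have hq1 : (0:ℝ) < (q:ℝ) + 1 := by positivity
        nlinarith [h1, h2, mul_pos hcn hnq]
      rw [heq, pow_succ]
      have hstep : ((m:ℝ) - q) / ((n:ℝ) - q) ≤ (m:ℝ)/n := by
        rw [div_le_div_iff₀ hnq hnr]
        have hmn' : (m:ℝ) ≤ (n:ℝ) := by exact_mod_cast hmn
        have hq0 : (0:ℝ) ≤ (q:ℝ) := Nat.cast_nonneg q
        nlinarith
      have hdiv0 : (0:ℝ) ≤ (m.choose q : ℝ) / n.choose q := by positivity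
      exact mul_le_mul ih hstep (by positivity) (by positivity)

lemma ident (a B C : ℕ) :
    (a + B).choose B * (a + C + B).choose C = (a + C + B).choose (a + C) * (a + C).choose a := by
  have h1 := Nat.choose_mul (n := a + C + B) (show a ≤ a + C by omega)
  have h2 := Nat.choose_mul (n := a + C + B) (show a ≤ a + B by omega)
  have e1 : a + C + B - a = C + B := by omega
  have e2 : a + C - a = C := by omega
  have e3 : a + B - a = B := by omega
  rw [e1, e2] at h1
  rw [e1, e3] at h2
  have s1 : (a + B).choose a = (a + B).choose B := Nat.choose_symm_add
  have s2 : (C + B).choose C = (C + B).choose B := Nat.choose_symm_add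
  have s3 : (a + C + B).choose (a + B) = (a + C + B).choose C := by
    have := Nat.choose_symm (show a + B ≤ a + C + B by omega)
    rw [show a + C + B - (a + B) = C by omega] at this
    exact this.symm
  rw [s1, s3] at h2
  rw [h1, s2, ← h2]
  ring

/-- for `d, b ≥ 0`, `1 ≤ p ≤ d` and `1 ≤ k ≤ b`,
`C(p-1+b, b)·C(d-p+b-k+1, d-p+1) / C(d+b, d) ≤ C(d, p-1)·((d-p+b-k+1)/(d+b))^(d-p+1)`
as real numbers. -/
theorem stmt4 (d b p k : ℕ) (hp : 1 ≤ p) (hpd : p ≤ d) (hk : 1 ≤ k) (hkb : k ≤ b) :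
    ((p - 1 + b).choose b : ℝ) * ((d - p + b - k + 1).choose (d - p + 1) : ℝ)
        / ((d + b).choose d : ℝ)
      ≤ (d.choose (p - 1) : ℝ)
          * (((d : ℝ) - p + b - k + 1) / ((d : ℝ) + b)) ^ (d - p + 1) := by
  obtain ⟨a, rfl⟩ : ∃ a, p = a + 1 := ⟨p - 1, by omega⟩
  obtain ⟨c, rfl⟩ : ∃ c, d = a + 1 + c := ⟨d - (a + 1), by omega⟩
  obtain ⟨j, rfl⟩ : ∃ j, b = k + j := ⟨b - k, by omega⟩
  have e1 : a + 1 - 1 = a := by omega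
  have e2 : a + 1 + c - (a + 1) + 1 = c + 1 := by omega
  have e3 : a + 1 + c - (a + 1) + (k + j) - k + 1 = c + j + 1 := by omega
  rw [e1, e2, e3]
  have er : ((a + 1 + c : ℕ) : ℝ) - ((a + 1 : ℕ) : ℝ) + ((k + j : ℕ) : ℝ) - (k : ℕ) + 1
      = ((c + j + 1 : ℕ) : ℝ) := by push_cast; ring
  rw [er]
  set n : ℕ := a + 1 + c + (k + j) with hn
  set m : ℕ := c + j + 1 with hm
  have hmn : m ≤ n := by omega
  have hn0 : 0 < n := by omega
  have hnr : ((a + 1 + c : ℕ) : ℝ) + ((k + j : ℕ) : ℝ) = (n : ℝ) := by push_cast [hn]; ring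
  rw [hnr]
  have hident : ((a + (k + j)).choose (k + j) : ℝ) * ((n).choose (c + 1) : ℝ)
      = ((n).choose (a + 1 + c) : ℝ) * ((a + 1 + c).choose a : ℝ) := by
    have := ident a (k + j) (c + 1)
    rw [show a + (c + 1) + (k + j) = n by omega, show a + (c + 1) = a + 1 + c by omega] at this
    exact_mod_cast this
  have hcnd : (0:ℝ) < ((n).choose (a + 1 + c) : ℝ) := by
    exact_mod_cast Nat.choose_pos (show a + 1 + c ≤ n by omega)
  have hcnq : (0:ℝ) < ((n).choose (c + 1) : ℝ) := by
    exact_mod_cast Nat.choose_pos (show c + 1 ≤ n by omega)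
  have hLHS : ((a + (k + j)).choose (k + j) : ℝ) * ((m).choose (c + 1) : ℝ)
        / ((n).choose (a + 1 + c) : ℝ)
      = ((a + 1 + c).choose a : ℝ) * (((m).choose (c + 1) : ℝ) / ((n).choose (c + 1) : ℝ)) := by
    rw [mul_div_assoc', div_eq_div_iff hcnd.ne' hcnq.ne']
    nlinarith [hident]
  rw [hLHS]
  have hkey := key_ratio (c + 1) m n hmn hn0
  have hC0 : (0:ℝ) ≤ ((a + 1 + c).choose a : ℝ) := Nat.cast_nonneg _
  calc ((a + 1 + c).choose a : ℝ) * (((m).choose (c + 1) : ℝ) / ((n).choose (c + 1) : ℝ))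
      ≤ ((a + 1 + c).choose a : ℝ) * (((m:ℝ)) / (n:ℝ)) ^ (c + 1) :=
        mul_le_mul_of_nonneg_left hkey hC0
    _ = _ := rfl
end

section
/- Let G be a bipartite graph with parts A and B, |E(G)| = m, and |A| = d ≥ 100·√m·(log m)^{3/2}, with m larger than an absolute constant. Let σ be a uniformly random permutation of A ∪ B. Then the probability that every vertex u ∈ A has a neighbor v ∈ N(u) with σ(v) < σ(u) is at most 1300·m·(log m)³/d². -/
open Finset
section Aux
open scoped Classical
variable {V : Type} [Fintype V] [DecidableEq V]

lemma aux_card_fiber (v : V) (i : Fin (Fintype.card V)) :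
    (univ.filter fun σ : V ≃ Fin (Fintype.card V) => σ v = i).card * Fintype.card V
      = (Fintype.card V).factorial := by
  classical
  have hconst : ∀ j : Fin (Fintype.card V),
      (univ.filter fun σ : V ≃ Fin (Fintype.card V) => σ v = j).card
        = (univ.filter fun σ : V ≃ Fin (Fintype.card V) => σ v = i).card := by
    intro j
    refine Finset.card_bij' (fun σ _ => σ.trans (Equiv.swap j i))
      (fun σ _ => σ.trans (Equiv.swap i j)) ?_ ?_ ?_ ?_
    · intro σ hσ
      simp only [mem_filter, mem_univ, true_and] at hσ ⊢
      rw [Equiv.trans_apply, hσ, Equiv.swap_apply_left]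
    · intro σ hσ
      simp only [mem_filter, mem_univ, true_and] at hσ ⊢
      rw [Equiv.trans_apply, hσ, Equiv.swap_apply_left]
    · intro σ _
      ext x
      simp [Equiv.trans_apply, Equiv.swap_comm j i, Equiv.swap_apply_self]
    · intro σ _
      ext x
      simp [Equiv.trans_apply, Equiv.swap_comm i j, Equiv.swap_apply_self]
  have hpart : (univ : Finset (V ≃ Fin (Fintype.card V))).card
      = ∑ j : Fin (Fintype.card V), (univ.filter fun σ : V ≃ Fin (Fintype.card V) => σ v = j).card :=
    Finset.card_eq_sum_card_fiberwise (fun σ _ => mem_univ (σ v))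
  have hcard : (univ : Finset (V ≃ Fin (Fintype.card V))).card = (Fintype.card V).factorial := by
    rw [Finset.card_univ]
    exact Fintype.card_equiv (Fintype.equivFin V)
  rw [← hcard, hpart, Finset.sum_congr rfl (fun j _ => hconst j), Finset.sum_const,
    card_univ, Fintype.card_fin, smul_eq_mul, mul_comm]
end Aux

section Aux2
open scoped Classical
variable {V : Type} [Fintype V] [DecidableEq V]

lemma aux_sum_symm (f : V → ℕ) (i : Fin (Fintype.card V)) :
    (∑ σ : V ≃ Fin (Fintype.card V), f (σ.symm i)) * Fintype.card V
      = (Fintype.card V).factorial * ∑ v, f v := by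
  classical
  have h1 : ∀ σ : V ≃ Fin (Fintype.card V), f (σ.symm i) = ∑ v, if σ v = i then f v else 0 := by
    intro σ
    rw [Finset.sum_congr rfl (g := fun v => if v = σ.symm i then f v else 0)
      (fun v _ => by simp [Equiv.eq_symm_apply, eq_comm])]
    simp
  calc (∑ σ : V ≃ Fin (Fintype.card V), f (σ.symm i)) * Fintype.card V
      = (∑ v, ∑ σ : V ≃ Fin (Fintype.card V), if σ v = i then f v else 0) * Fintype.card V := by
        rw [Finset.sum_congr rfl (fun σ _ => h1 σ), Finset.sum_comm]
    _ = ∑ v, ((univ.filter fun σ : V ≃ Fin (Fintype.card V) => σ v = i).card * f v)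
          * Fintype.card V := by
        rw [Finset.sum_mul]
        refine Finset.sum_congr rfl (fun v _ => ?_)
        rw [← Finset.sum_filter, Finset.sum_const, smul_eq_mul]
    _ = (Fintype.card V).factorial * ∑ v, f v := by
        rw [Finset.mul_sum]
        refine Finset.sum_congr rfl (fun v _ => ?_)
        rw [mul_right_comm, aux_card_fiber v i]
end Aux2
open Finset
section AuxC
open scoped Classical
variable {V : Type} [Fintype V] [DecidableEq V]

noncomputable def Cfam (G : SimpleGraph V) [DecidableRel G.Adj] (A : Finset V) (d q : ℕ) :
    Finset (Fin q → V) :=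
  univ.filter (fun g => Function.Injective g
    ∧ (∀ i, g i ∈ A → ∃ j, j < i ∧ G.Adj (g i) (g j))
    ∧ 4 * (∑ i, G.degree (g i)) ≤ d
    ∧ 4 * (univ.filter fun i => g i ∈ A).card ≤ d)

variable (G : SimpleGraph V) [DecidableRel G.Adj] (A : Finset V) (d : ℕ)

lemma Cfam_prefix_mem {q : ℕ} {g : Fin (q+1) → V} (hg : g ∈ Cfam G A d (q+1)) :
    (g ∘ Fin.castSucc) ∈ Cfam G A d q := by
  classical
  simp only [Cfam, mem_filter, mem_univ, true_and] at hg ⊢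
  obtain ⟨hinj, hctrl, hS, hT⟩ := hg
  refine ⟨hinj.comp (Fin.castSucc_injective q), ?_, ?_, ?_⟩
  · intro i hi
    obtain ⟨j, hj, hadj⟩ := hctrl (Fin.castSucc i) hi
    have hji : (j : ℕ) < (i : ℕ) := hj
    have hjq : (j : ℕ) < q := lt_trans hji i.isLt
    refine ⟨⟨(j : ℕ), hjq⟩, hji, ?_⟩
    have hcs : Fin.castSucc (⟨(j : ℕ), hjq⟩ : Fin q) = j := by
      apply Fin.ext; simp
    simpa [Function.comp, hcs] using hadj
  · refine le_trans ?_ hS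
    rw [Fin.sum_univ_castSucc (fun i => G.degree (g i))]
    exact Nat.mul_le_mul_left 4 (Nat.le_add_right _ _)
  · refine le_trans ?_ hT
    apply Nat.mul_le_mul_left 4
    rw [Finset.card_filter, Finset.card_filter,
      Fin.sum_univ_castSucc (fun i => if g i ∈ A then 1 else 0)]
    exact Nat.le_add_right _ _

lemma Cfam_step (hA : A.card = d) (q : ℕ) :
    (Cfam G A d (q+1)).card ≤ (Cfam G A d q).card * (Fintype.card V - q - (d - d/2)) := by
  classical
  set n := Fintype.card V with hn
  set Fr : (Fin q → V) → Finset V := fun w =>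
    A \ ((univ.image w) ∪ (A.filter fun u => ∃ i, G.Adj u (w i))) with hFr
  have key : (Cfam G A d (q+1)).card ≤
      ((Cfam G A d q).sigma (fun w => univ \ ((univ.image w) ∪ Fr w))).card := by
    apply Finset.card_le_card_of_injOn
      (fun g => (⟨g ∘ Fin.castSucc, g (Fin.last q)⟩ : Σ _ : Fin q → V, V))
    · intro g hg
      have hpre := Cfam_prefix_mem G A d hg
      simp only [Cfam, Finset.mem_coe, mem_filter, mem_univ, true_and] at hg
      obtain ⟨hinj, hctrl, hS, hT⟩ := hg
      rw [Finset.mem_coe, Finset.mem_sigma]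
      refine ⟨hpre, ?_⟩
      rw [Finset.mem_sdiff]
      refine ⟨mem_univ _, ?_⟩
      rw [Finset.mem_union]
      push_neg
      constructor
      · intro hmem
        rw [Finset.mem_image] at hmem
        obtain ⟨i, _, hiw⟩ := hmem
        have h1 : Fin.castSucc i = Fin.last q := hinj hiw
        have h2 : (i : ℕ) = q := by
          have := congrArg Fin.val h1
          simpa using this
        have h3 : (i : ℕ) < q := i.isLt
        omega
      · intro hmem
        rw [hFr] at hmem
        rw [Finset.mem_sdiff] at hmem
        obtain ⟨hlA, hnot⟩ := hmem
        obtain ⟨j, hj, hadj⟩ := hctrl (Fin.last q) hlA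
        have hjq : (j : ℕ) < q := hj
        have hcs : Fin.castSucc (⟨(j : ℕ), hjq⟩ : Fin q) = j := by
          apply Fin.ext; simp
        refine hnot (Finset.mem_union_right _ (Finset.mem_filter.mpr
          ⟨hlA, ⟨⟨(j : ℕ), hjq⟩, ?_⟩⟩))
        simpa [Function.comp, hcs] using hadj
    · intro g₁ h₁ g₂ h₂ heq
      have h1 : g₁ ∘ Fin.castSucc = g₂ ∘ Fin.castSucc :=
        congrArg (fun s : (Σ _ : Fin q → V, V) => s.1) heq
      have h2 : g₁ (Fin.last q) = g₂ (Fin.last q) :=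
        congrArg (fun s : (Σ _ : Fin q → V, V) => s.2) heq
      funext i
      refine Fin.lastCases ?_ (fun j => ?_) i
      · exact h2
      · exact congrFun h1 j
  refine le_trans key ?_
  rw [Finset.card_sigma]
  calc ∑ w ∈ Cfam G A d q, (univ \ ((univ.image w) ∪ Fr w)).card
      ≤ (Cfam G A d q).card • (n - q - (d - d/2)) := by
        apply Finset.sum_le_card_nsmul
        intro w hw
        simp only [Cfam, mem_filter, mem_univ, true_and] at hw
        obtain ⟨hinj, _, hS, hT⟩ := hw
        have himg : (univ.image w).card = q := by
          rw [Finset.card_image_of_injective _ hinj, card_univ, Fintype.card_fin]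
        have hdisj : Disjoint (univ.image w) (Fr w) := by
          rw [Finset.disjoint_left]
          intro a ha hfr
          rw [hFr, Finset.mem_sdiff] at hfr
          exact hfr.2 (Finset.mem_union_left _ ha)
        have hsd : (univ \ ((univ.image w) ∪ Fr w)).card
            = n - ((univ.image w) ∪ Fr w).card := by
          rw [Finset.card_sdiff_of_subset (Finset.subset_univ _), card_univ]
        have hcu : ((univ.image w) ∪ Fr w).card = q + (Fr w).card := by
          rw [Finset.card_union_of_disjoint hdisj, himg]
        -- lower bound on the number of fresh vertices
        have hKle : (A.filter fun u => ∃ i, G.Adj u (w i)).card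
            ≤ ∑ i, G.degree (w i) := by
          have hsub : (A.filter fun u => ∃ i, G.Adj u (w i))
              ⊆ univ.biUnion (fun i : Fin q => A.filter fun u => G.Adj u (w i)) := by
            intro u hu
            rw [Finset.mem_filter] at hu
            obtain ⟨huA, i, hadj⟩ := hu
            exact Finset.mem_biUnion.mpr ⟨i, mem_univ _, Finset.mem_filter.mpr ⟨huA, hadj⟩⟩
          refine le_trans (Finset.card_le_card hsub) (le_trans Finset.card_biUnion_le ?_)
          refine Finset.sum_le_sum (fun i _ => ?_)
          rw [← SimpleGraph.card_neighborFinset_eq_degree]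
          apply Finset.card_le_card
          intro u hu
          rw [Finset.mem_filter] at hu
          rw [SimpleGraph.mem_neighborFinset]
          exact hu.2.symm
        have hAX : (A ∩ (univ.image w)).card
            ≤ (univ.filter fun i => w i ∈ A).card := by
          have himg2 : A ∩ (univ.image w) = (univ.filter fun i => w i ∈ A).image w := by
            ext u
            simp only [Finset.mem_inter, Finset.mem_image, Finset.mem_filter, mem_univ,
              true_and]
            constructor
            · rintro ⟨huA, i, hiw⟩
              exact ⟨i, by rwa [hiw], hiw⟩
            · rintro ⟨i, hiA, hiw⟩
              exact ⟨by rwa [← hiw], ⟨i, hiw⟩⟩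
          rw [himg2]
          exact Finset.card_image_le
        have hIle : (A ∩ ((univ.image w) ∪ (A.filter fun u => ∃ i, G.Adj u (w i)))).card
            ≤ (univ.filter fun i => w i ∈ A).card
              + (A.filter fun u => ∃ i, G.Adj u (w i)).card := by
          have hsub : A ∩ ((univ.image w) ∪ (A.filter fun u => ∃ i, G.Adj u (w i)))
              ⊆ (A ∩ (univ.image w)) ∪ (A.filter fun u => ∃ i, G.Adj u (w i)) := by
            intro u hu
            simp only [Finset.mem_inter, Finset.mem_union] at hu ⊢
            tauto
          refine le_trans (Finset.card_le_card hsub) ?_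
          refine le_trans (Finset.card_union_le _ _) ?_
          exact Nat.add_le_add_right hAX _
        have hFrcard : (Fr w).card
            = A.card - (A ∩ ((univ.image w) ∪ (A.filter fun u => ∃ i, G.Adj u (w i)))).card := by
          have h : Fr w = A \ (A ∩ ((univ.image w) ∪ (A.filter fun u => ∃ i, G.Adj u (w i)))) := by
            rw [Finset.sdiff_inter_self_left]
          rw [h]
          exact Finset.card_sdiff_of_subset (Finset.inter_subset_left)
        have hfr_ge : d - d/2 ≤ (Fr w).card := by omega
        rw [hsd, hcu]
        omega
    _ = (Cfam G A d q).card * (n - q - (d - d/2)) := by rw [smul_eq_mul]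
end AuxC

section AuxD
open scoped Classical
variable {V : Type} [Fintype V] [DecidableEq V]
variable (G : SimpleGraph V) [DecidableRel G.Adj] (A : Finset V) (d : ℕ)

lemma Cfam_card_le (hA : A.card = d) (p : ℕ) :
    (Cfam G A d p).card ≤ ∏ k ∈ Finset.range p, (Fintype.card V - k - (d - d/2)) := by
  induction p with
  | zero =>
      simp only [Finset.range_zero, Finset.prod_empty]
      refine le_trans (Finset.card_le_card (Finset.filter_subset _ _)) ?_
      rw [card_univ]
      simp
  | succ q ih =>
      refine le_trans (Cfam_step G A d hA q) ?_
      rw [Finset.prod_range_succ]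
      exact Nat.mul_le_mul_right _ ih

lemma perm_count (p : ℕ) (hpn : p ≤ Fintype.card V) :
    (univ.filter fun σ : V ≃ Fin (Fintype.card V) =>
       (fun i : Fin p => σ.symm (Fin.castLE hpn i)) ∈ Cfam G A d p).card
    ≤ (Cfam G A d p).card * (Fintype.card V - p).factorial := by
  classical
  set n := Fintype.card V with hn
  set Tails : (Fin p → V) → Finset (Fin (n-p) → V) := fun w =>
    univ.filter (fun h => Function.Injective h ∧ ∀ j, h j ∉ univ.image w) with hTails
  have hidx : ∀ j : Fin (n - p), p + (j : ℕ) < n := by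
    intro j
    have := j.isLt
    omega
  have key : (univ.filter fun σ : V ≃ Fin n =>
       (fun i : Fin p => σ.symm (Fin.castLE hpn i)) ∈ Cfam G A d p).card
      ≤ ((Cfam G A d p).sigma (fun w => Tails w)).card := by
    apply Finset.card_le_card_of_injOn (fun σ =>
      (⟨fun i : Fin p => σ.symm (Fin.castLE hpn i),
        fun j : Fin (n-p) => σ.symm ⟨p + (j : ℕ), hidx j⟩⟩ : Σ _ : Fin p → V, Fin (n-p) → V))
    · intro σ hσ
      rw [Finset.mem_coe, Finset.mem_filter] at hσ
      rw [Finset.mem_coe, Finset.mem_sigma]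
      refine ⟨hσ.2, ?_⟩
      rw [hTails, Finset.mem_filter]
      refine ⟨mem_univ _, ?_, ?_⟩
      · intro j₁ j₂ hj
        have := σ.symm.injective hj
        have h2 := congrArg Fin.val this
        simp only [] at h2
        apply Fin.ext
        omega
      · intro j hmem
        rw [Finset.mem_image] at hmem
        obtain ⟨i, -, hiw⟩ := hmem
        have := σ.symm.injective hiw
        have h2 := congrArg Fin.val this
        simp only [Fin.coe_castLE] at h2
        have := i.isLt
        omega
    · intro σ₁ h₁ σ₂ h₂ heq
      have hfst := congrArg (fun s : (Σ _ : Fin p → V, Fin (n-p) → V) => s.1) heq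
      have hsnd := congrArg (fun s : (Σ _ : Fin p → V, Fin (n-p) → V) => s.2) heq
      simp only [] at hfst hsnd
      have hsymm : ∀ i : Fin n, σ₁.symm i = σ₂.symm i := by
        intro i
        by_cases hip : (i : ℕ) < p
        · have h := congrFun hfst ⟨(i : ℕ), hip⟩
          simpa [Fin.castLE, Fin.ext_iff] using h
        · push_neg at hip
          have hj : (i : ℕ) - p < n - p := by
            have := i.isLt
            omega
          have h := congrFun hsnd ⟨(i : ℕ) - p, hj⟩
          have hi : (⟨p + ((i : ℕ) - p), hidx ⟨(i : ℕ) - p, hj⟩⟩ : Fin n) = i := by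
            apply Fin.ext
            simp
            omega
          rwa [hi] at h
      apply Equiv.ext
      intro v
      have h := hsymm (σ₁ v)
      rw [Equiv.symm_apply_apply] at h
      have h2 := congrArg σ₂ h
      rw [Equiv.apply_symm_apply] at h2
      exact h2.symm
  refine le_trans key ?_
  rw [Finset.card_sigma]
  calc ∑ w ∈ Cfam G A d p, (Tails w).card
      ≤ (Cfam G A d p).card • (n - p).factorial := by
        apply Finset.sum_le_card_nsmul
        intro w hw
        simp only [Cfam, mem_filter, mem_univ, true_and] at hw
        obtain ⟨hinj, -, -, -⟩ := hw
        have hcompl : Fintype.card {v : V // v ∉ univ.image w} = n - p := by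
          rw [Fintype.card_subtype]
          have : univ.filter (fun v : V => v ∉ univ.image w) = univ \ univ.image w := by
            ext v; simp
          rw [this, Finset.card_sdiff_of_subset (Finset.subset_univ _), card_univ,
            Finset.card_image_of_injective _ hinj, card_univ, Fintype.card_fin]
        have hemb : (Tails w).card ≤ Fintype.card (Fin (n-p) ↪ {v : V // v ∉ univ.image w}) := by
          rw [← Fintype.card_coe (Tails w)]
          have hprop : ∀ x : {h // h ∈ Tails w},
              Function.Injective x.1 ∧ ∀ j, x.1 j ∉ univ.image w := by
            intro x
            have hx := x.2
            simp only [hTails, Finset.mem_filter] at hx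
            exact hx.2
          refine Fintype.card_le_of_injective
            (fun x => ⟨fun j => ⟨x.1 j, (hprop x).2 j⟩,
              fun j₁ j₂ hj => (hprop x).1 (congrArg Subtype.val hj)⟩) ?_
          intro x₁ x₂ heq
          apply Subtype.ext
          funext j
          have h3 := congrArg
            (fun e : Fin (n-p) ↪ {v : V // v ∉ univ.image w} => (e j : V)) heq
          exact h3
        refine le_trans hemb ?_
        rw [Fintype.card_embedding_eq, hcompl, Fintype.card_fin, Nat.descFactorial_self]
    _ = (Cfam G A d p).card * (n - p).factorial := by rw [smul_eq_mul]
end AuxD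

lemma fact_split (n : ℕ) : ∀ p, p ≤ n →
    (n - p).factorial * ∏ k ∈ Finset.range p, (n - k) = n.factorial := by
  intro p
  induction p with
  | zero => intro _; simp
  | succ q ih =>
      intro hp
      have h1 : n - q = (n - (q+1)) + 1 := by omega
      have h2 : (n - (q+1)).factorial * (n - q) = (n - q).factorial := by
        rw [h1, Nat.factorial_succ]
        ring
      rw [Finset.prod_range_succ, mul_comm (∏ k ∈ Finset.range q, (n - k)) (n - q),
        ← mul_assoc, h2, ih (by omega)]


set_option maxHeartbeats 1000000 in
open Finset in
open scoped Classical in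
/-- there is an absolute constant `m₀` such that the following holds.  Let `G`
be a bipartite graph with parts `A` and `B` (every edge joins `A` to `B`), `m = |E(G)| ≥ m₀`
edges, and `|A| = d ≥ 100·√m·(log m)^{3/2}`.  For a uniformly random permutation `σ` of
`A ∪ B` (a uniformly random bijection of the vertices onto positions), the probability that
every vertex `u ∈ A` has a neighbor `v` with `σ v < σ u` is at most `1300·m·(log m)³/d²`. -/
theorem stmt8 :
    ∃ m₀ : ℕ, ∀ (V : Type) (_ : Fintype V) (_ : DecidableEq V)
      (G : SimpleGraph V) (_ : DecidableRel G.Adj) (A B : Finset V),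
      Disjoint A B → A ∪ B = Finset.univ →
      (∀ u v : V, G.Adj u v → (u ∈ A ∧ v ∈ B) ∨ (u ∈ B ∧ v ∈ A)) →
      ∀ m d : ℕ, m = G.edgeFinset.card → d = A.card →
      m₀ ≤ m →
      100 * Real.sqrt m * (Real.log m) ^ ((3 : ℝ) / 2) ≤ (d : ℝ) →
      ((Finset.univ.filter (fun σ : V ≃ Fin (Fintype.card V) =>
          ∀ u ∈ A, ∃ v, G.Adj u v ∧ σ v < σ u)).card : ℝ)
          / (Fintype.card (V ≃ Fin (Fintype.card V)) : ℝ)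
        ≤ 1300 * m * (Real.log m) ^ 3 / (d : ℝ) ^ 2 := by
  classical
  refine ⟨1000000, ?_⟩
  intro V _instF _instD G _instR A B hdisj hunion hbip m d hm hd hm0 hlb
  have hm1R : (1:ℝ) ≤ (m:ℝ) := by
    have h : (1:ℕ) ≤ m := le_trans (by norm_num) hm0
    exact_mod_cast h
  have hm6R : (1000000:ℝ) ≤ (m:ℝ) := by exact_mod_cast hm0
  have hmpos : (0:ℝ) < m := lt_of_lt_of_le one_pos hm1R
  have hlog0 : 0 ≤ Real.log m := Real.log_nonneg hm1R
  have hRHSnn : 0 ≤ 1300 * (m:ℝ) * (Real.log m) ^ 3 / (d : ℝ) ^ 2 := by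
    apply div_nonneg _ (sq_nonneg _)
    exact mul_nonneg (mul_nonneg (by norm_num) (le_of_lt hmpos)) (pow_nonneg hlog0 3)
  by_cases hdeg : ∀ u ∈ A, ∃ v, G.Adj u v
  swap
  · -- degenerate case : some vertex of A has no neighbour at all
    have h0 : (univ.filter (fun σ : V ≃ Fin (Fintype.card V) =>
        ∀ u ∈ A, ∃ v, G.Adj u v ∧ σ v < σ u)) = ∅ := by
      rw [Finset.eq_empty_iff_forall_notMem]
      intro σ hσ
      rw [Finset.mem_filter] at hσ
      push_neg at hdeg
      obtain ⟨u, huA, hv⟩ := hdeg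
      obtain ⟨v, hadj, -⟩ := hσ.2 u huA
      exact hv v hadj
    rw [h0]
    simpa using hRHSnn
  -- main case: every vertex of A has a neighbour
  have hlog1 : 1 ≤ Real.log m := by
    have h1 : Real.exp 1 ≤ (m:ℝ) :=
      le_trans (le_of_lt Real.exp_one_lt_d9) (by linarith)
    calc (1:ℝ) = Real.log (Real.exp 1) := (Real.log_exp 1).symm
      _ ≤ Real.log m := Real.log_le_log (Real.exp_pos 1) h1
  -- d ≤ m
  have hdm : d ≤ m := by
    rw [hd, hm]
    have hmaps : ∀ u ∈ A, (if h : ∃ v, G.Adj u v then s(u, h.choose) else s(u,u)) ∈ G.edgeFinset := by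
      intro u hu
      rw [dif_pos (hdeg u hu)]
      rw [SimpleGraph.mem_edgeFinset, SimpleGraph.mem_edgeSet]
      exact (hdeg u hu).choose_spec
    apply Finset.card_le_card_of_injOn _ hmaps
    intro u₁ hu₁ u₂ hu₂ heq
    simp only [dif_pos (hdeg u₁ hu₁), dif_pos (hdeg u₂ hu₂)] at heq
    rw [Sym2.eq_iff] at heq
    rcases heq with ⟨h, -⟩ | ⟨h1, h2⟩
    · exact h
    · -- u₁ = choice of u₂ which lies in B; contradiction
      exfalso
      have hadj2 : G.Adj u₂ (hdeg u₂ hu₂).choose := (hdeg u₂ hu₂).choose_spec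
      have hu₂B : u₂ ∉ B := Finset.disjoint_left.mp hdisj hu₂
      rcases hbip u₂ _ hadj2 with ⟨-, hB⟩ | ⟨hB, -⟩
      · have : u₁ ∉ B := Finset.disjoint_left.mp hdisj hu₁
        rw [h1] at this
        exact this hB
      · exact hu₂B hB
  -- basic size facts
  have hnd : d ≤ Fintype.card V := by
    rw [hd, ← Finset.card_univ]
    exact Finset.card_le_card (Finset.subset_univ A)
  have hsq1 : 1 ≤ Real.sqrt m := Real.one_le_sqrt.mpr hm1R
  have hr32 : Real.log m ≤ Real.log m ^ ((3:ℝ)/2) := by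
    calc Real.log m = Real.log m ^ ((1:ℝ)) := (Real.rpow_one _).symm
      _ ≤ Real.log m ^ ((3:ℝ)/2) :=
        Real.rpow_le_rpow_of_exponent_le hlog1 (by norm_num)
  have hd100 : (100:ℝ) * Real.log m ≤ (d:ℝ) := by
    refine le_trans ?_ hlb
    calc (100:ℝ) * Real.log m = 100 * 1 * Real.log m := by ring
      _ ≤ 100 * Real.sqrt m * (Real.log m ^ ((3:ℝ)/2)) := by
          apply mul_le_mul (by nlinarith) hr32 (by linarith) (by positivity)
      _ = 100 * Real.sqrt m * Real.log m ^ ((3:ℝ)/2) := by ring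
  have hd100N : 100 ≤ d := by
    have h : (100:ℝ) ≤ (d:ℝ) := le_trans (by nlinarith) hd100
    exact_mod_cast h
  have hn100 : 100 ≤ Fintype.card V := le_trans hd100N hnd
  have hdRpos : (0:ℝ) < (d:ℝ) := by
    have : (0:ℕ) < d := by omega
    exact_mod_cast this
  have hnRpos : (0:ℝ) < (Fintype.card V : ℝ) := by
    have : (0:ℕ) < Fintype.card V := by omega
    exact_mod_cast this
  set L := Real.log m with hL
  -- choice of the prefix length
  set p := ⌈6 * (Fintype.card V : ℝ) * L / d⌉₊ with hp
  have hp_ge : 6 * (Fintype.card V : ℝ) * L / d ≤ (p:ℝ) := Nat.le_ceil _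
  have hp_le : (p:ℝ) ≤ 6 * (Fintype.card V : ℝ) * L / d + 1 :=
    le_of_lt (Nat.ceil_lt_add_one (by positivity))
  have hpn : p ≤ Fintype.card V := by
    have h1 : 6 * (Fintype.card V : ℝ) * L / d ≤ 6 * (Fintype.card V : ℝ) * L / (100 * L) :=
      div_le_div_of_nonneg_left (by positivity) (by positivity) hd100
    have h2 : 6 * (Fintype.card V : ℝ) * L / (100 * L) = 6 * (Fintype.card V : ℝ) / 100 := by
      have hLne : L ≠ 0 := by positivity
      field_simp
    have h3 : (p:ℝ) ≤ (Fintype.card V : ℝ) := by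
      have hn100R : (100:ℝ) ≤ (Fintype.card V : ℝ) := by exact_mod_cast hn100
      calc (p:ℝ) ≤ 6 * (Fintype.card V : ℝ) * L / d + 1 := hp_le
        _ ≤ 6 * (Fintype.card V : ℝ) / 100 + 1 := by rw [← h2]; linarith
        _ ≤ (Fintype.card V : ℝ) := by linarith
    exact_mod_cast h3
  -- names for the three bad events
  have hA' : A.card = d := hd.symm
  have hcardperm : Fintype.card (V ≃ Fin (Fintype.card V)) = (Fintype.card V).factorial :=
    Fintype.card_equiv (Fintype.equivFin V)
  set F1 := univ.filter (fun σ : V ≃ Fin (Fintype.card V) =>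
      (fun i : Fin p => σ.symm (Fin.castLE hpn i)) ∈ Cfam G A d p) with hF1def
  set F2 := univ.filter (fun σ : V ≃ Fin (Fintype.card V) =>
      ¬ (4 * (∑ i : Fin p, (fun v => G.degree v) (σ.symm (Fin.castLE hpn i))) ≤ d)) with hF2def
  set F3 := univ.filter (fun σ : V ≃ Fin (Fintype.card V) =>
      ¬ (4 * (∑ i : Fin p, (fun v => if v ∈ A then 1 else 0) (σ.symm (Fin.castLE hpn i))) ≤ d))
    with hF3def
  -- the event is contained in the union of the three bad events
  have hsub : (univ.filter (fun σ : V ≃ Fin (Fintype.card V) =>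
      ∀ u ∈ A, ∃ v, G.Adj u v ∧ σ v < σ u)) ⊆ F1 ∪ F2 ∪ F3 := by
    intro σ hσ
    rw [Finset.mem_filter] at hσ
    obtain ⟨-, hev⟩ := hσ
    by_cases hS : 4 * (∑ i : Fin p, (fun v => G.degree v) (σ.symm (Fin.castLE hpn i))) ≤ d
    swap
    · exact Finset.mem_union_left _
        (Finset.mem_union_right _ (Finset.mem_filter.mpr ⟨mem_univ _, hS⟩))
    by_cases hT : 4 * (∑ i : Fin p,
        (fun v => if v ∈ A then 1 else 0) (σ.symm (Fin.castLE hpn i))) ≤ d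
    swap
    · exact Finset.mem_union_right _ (Finset.mem_filter.mpr ⟨mem_univ _, hT⟩)
    refine Finset.mem_union_left _ (Finset.mem_union_left _
      (Finset.mem_filter.mpr ⟨mem_univ _, ?_⟩))
    simp only [Cfam, Finset.mem_filter, Finset.mem_univ, true_and]
    refine ⟨?_, ?_, ?_, ?_⟩
    · intro i₁ i₂ hi
      exact Fin.castLE_injective hpn (σ.symm.injective hi)
    · intro i hi
      obtain ⟨v, hadj, hlt⟩ := hev _ hi
      have hlt2 : ((σ v : Fin (Fintype.card V)) : ℕ) < ((Fin.castLE hpn i : Fin (Fintype.card V)) : ℕ) := by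
        have h := hlt
        rw [Equiv.apply_symm_apply] at h
        exact h
      have hlt3 : ((σ v : Fin (Fintype.card V)) : ℕ) < (i : ℕ) := by
        simpa using hlt2
      have hjp : ((σ v : Fin (Fintype.card V)) : ℕ) < p := lt_trans hlt3 i.isLt
      refine ⟨⟨((σ v : Fin (Fintype.card V)) : ℕ), hjp⟩, ?_, ?_⟩
      · exact hlt3
      · have hcle : Fin.castLE hpn (⟨((σ v : Fin (Fintype.card V)) : ℕ), hjp⟩ : Fin p) = σ v := by
          apply Fin.ext; simp
        rw [hcle, Equiv.symm_apply_apply]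
        exact hadj
    · exact hS
    · rw [Finset.card_filter]
      exact hT
  -- Markov-type counting for the two sum conditions
  have hswap : ∀ f : V → ℕ,
      (∑ σ : V ≃ Fin (Fintype.card V), ∑ i : Fin p, f (σ.symm (Fin.castLE hpn i)))
          * (Fintype.card V)
        = (Fintype.card V).factorial * (p * ∑ v, f v) := by
    intro f
    rw [Finset.sum_comm, Finset.sum_mul,
      Finset.sum_congr rfl (fun i _ => aux_sum_symm f (Fin.castLE hpn i)),
      Finset.sum_const, card_univ, Fintype.card_fin, smul_eq_mul]
    ring
  have hMarkov : ∀ f : V → ℕ,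
      (univ.filter (fun σ : V ≃ Fin (Fintype.card V) =>
        ¬ (4 * (∑ i : Fin p, f (σ.symm (Fin.castLE hpn i))) ≤ d))).card
          * ((d+1) * Fintype.card V)
        ≤ 4 * ((Fintype.card V).factorial * (p * ∑ v, f v)) := by
    intro f
    have h1 : (univ.filter (fun σ : V ≃ Fin (Fintype.card V) =>
        ¬ (4 * (∑ i : Fin p, f (σ.symm (Fin.castLE hpn i))) ≤ d))).card * (d+1)
        ≤ ∑ σ ∈ univ.filter (fun σ : V ≃ Fin (Fintype.card V) =>
            ¬ (4 * (∑ i : Fin p, f (σ.symm (Fin.castLE hpn i))) ≤ d)),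
            4 * (∑ i : Fin p, f (σ.symm (Fin.castLE hpn i))) := by
      rw [← smul_eq_mul]
      apply Finset.card_nsmul_le_sum
      intro σ hσ
      rw [Finset.mem_filter] at hσ
      omega
    have h2 : ∑ σ ∈ univ.filter (fun σ : V ≃ Fin (Fintype.card V) =>
            ¬ (4 * (∑ i : Fin p, f (σ.symm (Fin.castLE hpn i))) ≤ d)),
            4 * (∑ i : Fin p, f (σ.symm (Fin.castLE hpn i)))
        ≤ ∑ σ : V ≃ Fin (Fintype.card V), 4 * (∑ i : Fin p, f (σ.symm (Fin.castLE hpn i))) :=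
      Finset.sum_le_sum_of_subset (Finset.subset_univ _)
    have h3 : ∑ σ : V ≃ Fin (Fintype.card V), 4 * (∑ i : Fin p, f (σ.symm (Fin.castLE hpn i)))
        = 4 * ∑ σ : V ≃ Fin (Fintype.card V), ∑ i : Fin p, f (σ.symm (Fin.castLE hpn i)) :=
      (Finset.mul_sum _ _ _).symm
    calc (univ.filter (fun σ : V ≃ Fin (Fintype.card V) =>
        ¬ (4 * (∑ i : Fin p, f (σ.symm (Fin.castLE hpn i))) ≤ d))).card * ((d+1) * Fintype.card V)
        = ((univ.filter (fun σ : V ≃ Fin (Fintype.card V) =>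
            ¬ (4 * (∑ i : Fin p, f (σ.symm (Fin.castLE hpn i))) ≤ d))).card * (d+1))
              * Fintype.card V := by ring
      _ ≤ (∑ σ : V ≃ Fin (Fintype.card V),
            4 * (∑ i : Fin p, f (σ.symm (Fin.castLE hpn i)))) * Fintype.card V :=
          Nat.mul_le_mul_right _ (le_trans h1 h2)
      _ = 4 * ((∑ σ : V ≃ Fin (Fintype.card V),
            ∑ i : Fin p, f (σ.symm (Fin.castLE hpn i))) * Fintype.card V) := by
          rw [h3]; ring
      _ = 4 * ((Fintype.card V).factorial * (p * ∑ v, f v)) := by rw [hswap f]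
  have hdegsum : (∑ v, G.degree v) = 2 * m := by
    rw [hm]
    exact SimpleGraph.sum_degrees_eq_twice_card_edges G
  have hindsum : (∑ v : V, if v ∈ A then 1 else 0) = d := by
    rw [← Finset.card_filter, hd]
    congr 1
    ext u
    simp
  have hM2 : F2.card * ((d+1) * Fintype.card V)
      ≤ 4 * ((Fintype.card V).factorial * (p * (2 * m))) := by
    have h := hMarkov (fun v => G.degree v)
    rw [hdegsum] at h
    exact h
  have hM3 : F3.card * ((d+1) * Fintype.card V)
      ≤ 4 * ((Fintype.card V).factorial * (p * d)) := by
    have h := hMarkov (fun v => if v ∈ A then 1 else 0)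
    rw [hindsum] at h
    exact h
  have hF1card : F1.card ≤ (∏ k ∈ Finset.range p, (Fintype.card V - k - (d - d/2)))
      * (Fintype.card V - p).factorial := by
    rw [hF1def]
    refine le_trans (perm_count G A d p hpn) ?_
    exact Nat.mul_le_mul_right _ (Cfam_card_le G A d hA' p)
  -- pass to the reals
  have hfactpos : (0:ℝ) < ((Fintype.card V).factorial : ℝ) := by
    exact_mod_cast Nat.factorial_pos _
  set nR := (Fintype.card V : ℝ) with hnR
  have hdnR : (d:ℝ) ≤ nR := by rw [hnR]; exact_mod_cast hnd
  have hdmR : (d:ℝ) ≤ (m:ℝ) := by exact_mod_cast hdm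
  have hL21 : 1 ≤ L^2 := by linarith [mul_le_mul hlog1 hlog1 zero_le_one hlog0]
  have hL31 : 1 ≤ L^3 := by
    linarith [mul_le_mul hL21 hlog1 zero_le_one (by positivity : (0:ℝ) ≤ L^2)]
  have hL3 : L ≤ L^3 := by linarith [mul_le_mul_of_nonneg_left hL21 hlog0]
  have hppR : (0:ℝ) ≤ (p:ℝ) := Nat.cast_nonneg p
  have hpdle : (p:ℝ) * d ≤ 6 * nR * L + d := by
    have h6 : 6 * nR * L / d * d = 6 * nR * L := div_mul_cancel₀ _ (ne_of_gt hdRpos)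
    have h7 := mul_le_mul_of_nonneg_right hp_le (le_of_lt hdRpos)
    rw [add_mul, one_mul, h6] at h7
    exact h7
  -- bound for F1
  have hD2n : d - d/2 ≤ Fintype.card V := le_trans (Nat.sub_le d _) hnd
  have hD2R : (d:ℝ)/2 ≤ ((d - d/2 : ℕ):ℝ) := by
    have h1 : ((d - d/2 : ℕ):ℝ) = (d:ℝ) - ((d/2 : ℕ):ℝ) := by
      rw [Nat.cast_sub (Nat.div_le_self d 2)]
    have h2 : ((d/2:ℕ):ℝ) ≤ (d:ℝ)/2 := Nat.cast_div_le
    linarith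
  have hD2Rn : ((d - d/2 : ℕ):ℝ) ≤ nR := by rw [hnR]; exact_mod_cast hD2n
  have hB1 : (F1.card : ℝ) / ((Fintype.card V).factorial : ℝ)
      ≤ (m:ℝ) * L^3 / (d:ℝ)^2 := by
    have hprodb_pos : (0:ℝ) < ∏ k ∈ Finset.range p, ((Fintype.card V - k : ℕ):ℝ) := by
      apply Finset.prod_pos
      intro k hk
      rw [Finset.mem_range] at hk
      have h : 0 < Fintype.card V - k := by
        have := lt_of_lt_of_le hk hpn
        omega
      exact_mod_cast h
    have hstep1 : (F1.card : ℝ)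
        ≤ (∏ k ∈ Finset.range p, ((Fintype.card V - k - (d - d/2) : ℕ):ℝ))
          * ((Fintype.card V - p).factorial : ℝ) := by
      exact_mod_cast hF1card
    have hfs : ((Fintype.card V).factorial : ℝ)
        = ((Fintype.card V - p).factorial : ℝ)
          * ∏ k ∈ Finset.range p, ((Fintype.card V - k : ℕ):ℝ) := by
      exact_mod_cast (fact_split (Fintype.card V) p hpn).symm
    have hration : (F1.card : ℝ) / ((Fintype.card V).factorial : ℝ)
        ≤ ∏ k ∈ Finset.range p,
            (((Fintype.card V - k - (d - d/2) : ℕ):ℝ) / ((Fintype.card V - k : ℕ):ℝ)) := by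
      rw [Finset.prod_div_distrib, div_le_div_iff₀ hfactpos hprodb_pos, hfs]
      calc (F1.card:ℝ) * ∏ k ∈ Finset.range p, ((Fintype.card V - k : ℕ):ℝ)
          ≤ ((∏ k ∈ Finset.range p, ((Fintype.card V - k - (d - d/2) : ℕ):ℝ))
              * ((Fintype.card V - p).factorial : ℝ))
                * ∏ k ∈ Finset.range p, ((Fintype.card V - k : ℕ):ℝ) :=
            mul_le_mul_of_nonneg_right hstep1 (le_of_lt hprodb_pos)
        _ = (∏ k ∈ Finset.range p, ((Fintype.card V - k - (d - d/2) : ℕ):ℝ))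
              * (((Fintype.card V - p).factorial : ℝ)
                * ∏ k ∈ Finset.range p, ((Fintype.card V - k : ℕ):ℝ)) := by ring
    have hratio_le : ∀ k ∈ Finset.range p,
        (((Fintype.card V - k - (d - d/2) : ℕ):ℝ) / ((Fintype.card V - k : ℕ):ℝ))
          ≤ 1 - ((d - d/2 : ℕ):ℝ) / nR := by
      intro k hk
      rw [Finset.mem_range] at hk
      have hkn : k < Fintype.card V := lt_of_lt_of_le hk hpn
      have hbpos : (0:ℝ) < ((Fintype.card V - k : ℕ):ℝ) := by
        have h : 0 < Fintype.card V - k := by omega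
        exact_mod_cast h
      have hbn : ((Fintype.card V - k : ℕ):ℝ) ≤ nR := by
        rw [hnR]; exact_mod_cast Nat.sub_le _ _
      by_cases hcase : (d - d/2) ≤ Fintype.card V - k
      · have hcast : ((Fintype.card V - k - (d - d/2) : ℕ):ℝ)
            = ((Fintype.card V - k : ℕ):ℝ) - ((d - d/2 : ℕ):ℝ) := by
          rw [Nat.cast_sub hcase]
        rw [hcast, sub_div, div_self (ne_of_gt hbpos)]
        have h5 := div_le_div_of_nonneg_left
          (by positivity : (0:ℝ) ≤ ((d - d/2 : ℕ):ℝ)) hbpos hbn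
        linarith
      · have h0 : Fintype.card V - k - (d - d/2) = 0 := by omega
        rw [h0]
        simp only [Nat.cast_zero, zero_div]
        have h6 : ((d - d/2 : ℕ):ℝ)/nR ≤ 1 := div_le_one_of_le₀ hD2Rn (le_of_lt hnRpos)
        linarith
    have hprod2 : ∏ k ∈ Finset.range p,
        (((Fintype.card V - k - (d - d/2) : ℕ):ℝ) / ((Fintype.card V - k : ℕ):ℝ))
          ≤ (1 - ((d - d/2 : ℕ):ℝ)/nR)^p := by
      calc ∏ k ∈ Finset.range p,
          (((Fintype.card V - k - (d - d/2) : ℕ):ℝ) / ((Fintype.card V - k : ℕ):ℝ))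
          ≤ ∏ _k ∈ Finset.range p, (1 - ((d - d/2 : ℕ):ℝ)/nR) := by
            apply Finset.prod_le_prod
            · intro k hk
              positivity
            · exact hratio_le
        _ = (1 - ((d - d/2 : ℕ):ℝ)/nR)^p := by
            rw [Finset.prod_const, Finset.card_range]
    have h1m : 0 ≤ 1 - ((d - d/2 : ℕ):ℝ)/nR := by
      have h : ((d - d/2 : ℕ):ℝ)/nR ≤ 1 := div_le_one_of_le₀ hD2Rn (le_of_lt hnRpos)
      linarith
    have hexp1 : 1 - ((d - d/2 : ℕ):ℝ)/nR ≤ Real.exp (-(((d - d/2 : ℕ):ℝ)/nR)) := by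
      have h := Real.add_one_le_exp (-(((d - d/2 : ℕ):ℝ)/nR))
      linarith
    have hpow : (1 - ((d - d/2 : ℕ):ℝ)/nR)^p ≤ Real.exp (-(((d - d/2 : ℕ):ℝ)/nR))^p :=
      pow_le_pow_left₀ h1m hexp1 p
    have hexp2 : Real.exp (-(((d - d/2 : ℕ):ℝ)/nR))^p
        = Real.exp ((p:ℝ) * (-(((d - d/2 : ℕ):ℝ)/nR))) := (Real.exp_nat_mul _ p).symm
    have hexp3 : Real.exp ((p:ℝ) * (-(((d - d/2 : ℕ):ℝ)/nR))) ≤ Real.exp (-(3*L)) := by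
      rw [Real.exp_le_exp]
      have hpd : 6 * nR * L ≤ (p:ℝ) * d := by
        rw [div_le_iff₀ hdRpos] at hp_ge
        exact hp_ge
      have h2 : 3 * L * nR ≤ (p:ℝ) * ((d - d/2 : ℕ):ℝ) := by
        linarith [mul_le_mul_of_nonneg_left hD2R hppR, hpd]
      have h3 : 3*L ≤ (p:ℝ) * ((d - d/2 : ℕ):ℝ) / nR := by
        rw [le_div_iff₀ hnRpos]
        linarith
      have h4 : (p:ℝ) * (-(((d - d/2 : ℕ):ℝ)/nR)) = -((p:ℝ) * ((d - d/2 : ℕ):ℝ)/nR) := by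
        ring
      rw [h4]
      linarith
    have hexp4 : Real.exp (-(3*L)) = ((m:ℝ)^3)⁻¹ := by
      rw [Real.exp_neg]
      congr 1
      rw [show (3:ℝ)*L = L + (L + L) by ring, Real.exp_add, Real.exp_add, hL,
        Real.exp_log hmpos]
      ring
    have hfinal1 : ((m:ℝ)^3)⁻¹ ≤ (m:ℝ) * L^3 / (d:ℝ)^2 := by
      rw [inv_eq_one_div, div_le_div_iff₀ (by positivity) (by positivity)]
      have hd2m2 : (d:ℝ)^2 ≤ (m:ℝ)^2 := pow_le_pow_left₀ (le_of_lt hdRpos) hdmR 2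
      have h1 : (m:ℝ)^2 ≤ (m:ℝ)^4 := pow_le_pow_right₀ hm1R (by norm_num)
      calc 1*(d:ℝ)^2 = (d:ℝ)^2 := one_mul _
        _ ≤ (m:ℝ)^2 := hd2m2
        _ ≤ (m:ℝ)^4 := h1
        _ = 1*(m:ℝ)^4 := (one_mul _).symm
        _ ≤ L^3*(m:ℝ)^4 := mul_le_mul_of_nonneg_right hL31 (by positivity)
        _ = (m:ℝ)*L^3*(m:ℝ)^3 := by ring
    calc (F1.card : ℝ) / ((Fintype.card V).factorial : ℝ)
        ≤ ∏ k ∈ Finset.range p,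
            (((Fintype.card V - k - (d - d/2) : ℕ):ℝ) / ((Fintype.card V - k : ℕ):ℝ)) := hration
      _ ≤ (1 - ((d - d/2 : ℕ):ℝ)/nR)^p := hprod2
      _ ≤ Real.exp (-(((d - d/2 : ℕ):ℝ)/nR))^p := hpow
      _ = Real.exp ((p:ℝ) * (-(((d - d/2 : ℕ):ℝ)/nR))) := hexp2
      _ ≤ Real.exp (-(3*L)) := hexp3
      _ = ((m:ℝ)^3)⁻¹ := hexp4
      _ ≤ (m:ℝ) * L^3 / (d:ℝ)^2 := hfinal1
  -- bound for F2
  have hB2 : (F2.card : ℝ) / ((Fintype.card V).factorial : ℝ)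
      ≤ 56 * (m:ℝ) * L^3 / (d:ℝ)^2 := by
    have hcast : (F2.card:ℝ) * (((d:ℝ)+1) * nR)
        ≤ 4 * (((Fintype.card V).factorial:ℝ) * ((p:ℝ) * (2*(m:ℝ)))) := by
      rw [hnR]
      exact_mod_cast hM2
    have hkey : 8*(p:ℝ)*(m:ℝ)*(d:ℝ)^2 ≤ 56*(m:ℝ)*L^3*(((d:ℝ)+1)*nR) := by
      have e2 : (8*(m:ℝ)*d)*((p:ℝ)*d) ≤ (8*(m:ℝ)*d)*(6*nR*L + d) :=
        mul_le_mul_of_nonneg_left hpdle (by positivity)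
      have e4 : 48*(m:ℝ)*d*nR*L ≤ 48*(m:ℝ)*d*nR*L^3 :=
        mul_le_mul_of_nonneg_left hL3 (by positivity)
      have e5 : 8*(m:ℝ)*d*d ≤ 8*(m:ℝ)*d*nR :=
        mul_le_mul_of_nonneg_left hdnR (by positivity)
      have e6 : 8*(m:ℝ)*d*nR*1 ≤ 8*(m:ℝ)*d*nR*L^3 :=
        mul_le_mul_of_nonneg_left hL31 (by positivity)
      have e9 : (0:ℝ) ≤ 56*(m:ℝ)*L^3*nR := by positivity
      linarith [e2, e4, e5, e6, e9]
    rw [div_le_div_iff₀ hfactpos (by positivity)]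
    have hpos : (0:ℝ) < ((d:ℝ)+1)*nR := by positivity
    rw [← mul_le_mul_iff_of_pos_right hpos]
    calc (F2.card:ℝ)*(d:ℝ)^2*(((d:ℝ)+1)*nR)
        = ((F2.card:ℝ)*(((d:ℝ)+1)*nR))*(d:ℝ)^2 := by ring
      _ ≤ (4 * (((Fintype.card V).factorial:ℝ) * ((p:ℝ) * (2*(m:ℝ)))))*(d:ℝ)^2 :=
          mul_le_mul_of_nonneg_right hcast (sq_nonneg _)
      _ = (8*(p:ℝ)*(m:ℝ)*(d:ℝ)^2) * ((Fintype.card V).factorial:ℝ) := by ring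
      _ ≤ (56*(m:ℝ)*L^3*(((d:ℝ)+1)*nR)) * ((Fintype.card V).factorial:ℝ) :=
          mul_le_mul_of_nonneg_right hkey (le_of_lt hfactpos)
      _ = 56*(m:ℝ)*L^3*((Fintype.card V).factorial:ℝ)*(((d:ℝ)+1)*nR) := by ring
  -- bound for F3
  have hB3 : (F3.card : ℝ) / ((Fintype.card V).factorial : ℝ)
      ≤ 28 * (m:ℝ) * L^3 / (d:ℝ)^2 := by
    have hcast : (F3.card:ℝ) * (((d:ℝ)+1) * nR)
        ≤ 4 * (((Fintype.card V).factorial:ℝ) * ((p:ℝ) * (d:ℝ))) := by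
      rw [hnR]
      exact_mod_cast hM3
    have hkey : 4*(p:ℝ)*(d:ℝ)*(d:ℝ)^2 ≤ 28*(m:ℝ)*L^3*(((d:ℝ)+1)*nR) := by
      have e2 : (4*(d:ℝ)*d)*((p:ℝ)*d) ≤ (4*(d:ℝ)*d)*(6*nR*L + d) :=
        mul_le_mul_of_nonneg_left hpdle (by positivity)
      have e4 : 24*(d:ℝ)*d*nR*L ≤ 24*(m:ℝ)*d*nR*L := by
        linarith [mul_le_mul_of_nonneg_left hdmR
          (by positivity : (0:ℝ) ≤ 24*(d:ℝ)*nR*L)]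
      have e5 : 24*(m:ℝ)*d*nR*L ≤ 24*(m:ℝ)*d*nR*L^3 :=
        mul_le_mul_of_nonneg_left hL3 (by positivity)
      have e6 : 4*(d:ℝ)*d*d ≤ 4*(m:ℝ)*d*d := by
        linarith [mul_le_mul_of_nonneg_left hdmR (by positivity : (0:ℝ) ≤ 4*(d:ℝ)*d)]
      have e7 : 4*(m:ℝ)*d*d ≤ 4*(m:ℝ)*d*nR :=
        mul_le_mul_of_nonneg_left hdnR (by positivity)
      have e8 : 4*(m:ℝ)*d*nR*1 ≤ 4*(m:ℝ)*d*nR*L^3 :=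
        mul_le_mul_of_nonneg_left hL31 (by positivity)
      have e9 : (0:ℝ) ≤ 28*(m:ℝ)*L^3*nR := by positivity
      linarith [e2, e4, e5, e6, e7, e8, e9]
    rw [div_le_div_iff₀ hfactpos (by positivity)]
    have hpos : (0:ℝ) < ((d:ℝ)+1)*nR := by positivity
    rw [← mul_le_mul_iff_of_pos_right hpos]
    calc (F3.card:ℝ)*(d:ℝ)^2*(((d:ℝ)+1)*nR)
        = ((F3.card:ℝ)*(((d:ℝ)+1)*nR))*(d:ℝ)^2 := by ring
      _ ≤ (4 * (((Fintype.card V).factorial:ℝ) * ((p:ℝ) * (d:ℝ))))*(d:ℝ)^2 :=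
          mul_le_mul_of_nonneg_right hcast (sq_nonneg _)
      _ = (4*(p:ℝ)*(d:ℝ)*(d:ℝ)^2) * ((Fintype.card V).factorial:ℝ) := by ring
      _ ≤ (28*(m:ℝ)*L^3*(((d:ℝ)+1)*nR)) * ((Fintype.card V).factorial:ℝ) :=
          mul_le_mul_of_nonneg_right hkey (le_of_lt hfactpos)
      _ = 28*(m:ℝ)*L^3*((Fintype.card V).factorial:ℝ)*(((d:ℝ)+1)*nR) := by ring
  -- put everything together
  have hEvle : (univ.filter (fun σ : V ≃ Fin (Fintype.card V) =>
      ∀ u ∈ A, ∃ v, G.Adj u v ∧ σ v < σ u)).card ≤ F1.card + F2.card + F3.card := by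
    refine le_trans (Finset.card_le_card hsub) ?_
    refine le_trans (Finset.card_union_le _ _) ?_
    exact Nat.add_le_add_right (Finset.card_union_le _ _) _
  rw [hcardperm]
  have hcast2 : ((univ.filter (fun σ : V ≃ Fin (Fintype.card V) =>
      ∀ u ∈ A, ∃ v, G.Adj u v ∧ σ v < σ u)).card : ℝ)
      ≤ (F1.card:ℝ) + F2.card + F3.card := by
    exact_mod_cast hEvle
  have hnn : (0:ℝ) ≤ (m:ℝ) * L^3 / (d:ℝ)^2 := by positivity
  calc ((univ.filter (fun σ : V ≃ Fin (Fintype.card V) =>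
          ∀ u ∈ A, ∃ v, G.Adj u v ∧ σ v < σ u)).card : ℝ)
          / ((Fintype.card V).factorial : ℝ)
      ≤ ((F1.card:ℝ) + F2.card + F3.card) / ((Fintype.card V).factorial : ℝ) :=
        (div_le_div_iff_of_pos_right hfactpos).mpr hcast2
    _ = (F1.card:ℝ) / ((Fintype.card V).factorial : ℝ)
        + (F2.card:ℝ) / ((Fintype.card V).factorial : ℝ)
        + (F3.card:ℝ) / ((Fintype.card V).factorial : ℝ) := by ring
    _ ≤ (m:ℝ) * L^3 / (d:ℝ)^2 + 56 * (m:ℝ) * L^3 / (d:ℝ)^2 + 28 * (m:ℝ) * L^3 / (d:ℝ)^2 := by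
        linarith [hB1, hB2, hB3]
    _ ≤ 1300 * (m:ℝ) * L^3 / (d:ℝ)^2 := by
        have h85 : (m:ℝ) * L^3 / (d:ℝ)^2 + 56 * (m:ℝ) * L^3 / (d:ℝ)^2
            + 28 * (m:ℝ) * L^3 / (d:ℝ)^2 = 85 * ((m:ℝ) * L^3 / (d:ℝ)^2) := by ring
        have h13 : 1300 * (m:ℝ) * L^3 / (d:ℝ)^2 = 1300 * ((m:ℝ) * L^3 / (d:ℝ)^2) := by ring
        rw [h85, h13]
        linarith
end

section
/- If a graph G with m edges has arboricity at most λ, then there exists an orientation of its edges such that every vertex has out-degree at most λ. -/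
open Finset in
open scoped Classical in
/-- if a finite graph `G` has arboricity at most `λ` in the Nash-Williams
density sense (`|E(U)| ≤ λ·(|U| - 1)` for every vertex subset `U` with `|U| ≥ 2`, i.e.
`⌈|E(U)|/(|U|-1)⌉ ≤ λ`), then there is an orientation of its edges (a choice `r u v` of
direction `u → v` for each edge) in which every vertex has out-degree at most `λ`. -/
theorem stmt10 {V : Type*} [Fintype V] [DecidableEq V]
    (G : SimpleGraph V) [DecidableRel G.Adj] (lam : ℕ)
    (harb : ∀ U : Finset V, 2 ≤ U.card →
      (G.edgeFinset.filter (fun e => ∀ x ∈ e, x ∈ U)).card ≤ lam * (U.card - 1)) :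
    ∃ r : V → V → Bool,
      (∀ u v, G.Adj u v → (r u v = !r v u)) ∧
      (∀ u v, r u v = true → G.Adj u v) ∧
      (∀ v, (Finset.univ.filter (fun u => r v u = true)).card ≤ lam) := by
  classical
  set t : {e : Sym2 V // e ∈ G.edgeFinset} → Finset (V × Fin lam) :=
    fun e => univ.filter (fun p => p.1 ∈ e.1) with ht
  have hall : ∀ s : Finset {e : Sym2 V // e ∈ G.edgeFinset},
      s.card ≤ (s.biUnion t).card := by
    intro s
    rcases s.eq_empty_or_nonempty with rfl | ⟨e0, he0⟩
    · simp
    set U : Finset V := univ.filter (fun v => ∃ e ∈ s, v ∈ (e : Sym2 V)) with hU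
    have hbi : s.biUnion t = U ×ˢ (univ : Finset (Fin lam)) := by
      ext p
      simp only [Finset.mem_biUnion, ht, Finset.mem_filter, Finset.mem_univ, true_and,
        Finset.mem_product, hU]
      constructor
      · rintro ⟨e, he, hpe⟩; exact ⟨⟨e, he, hpe⟩, trivial⟩
      · rintro ⟨⟨e, he, hpe⟩, -⟩; exact ⟨e, he, hpe⟩
    have hcard2 : 2 ≤ U.card := by
      obtain ⟨⟨a, b⟩, hab0⟩ := Quot.exists_rep (e0 : Sym2 V)
      have hab : (e0 : Sym2 V) = s(a, b) := hab0.symm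
      have hadj : G.Adj a b := by
        have := e0.2
        rw [SimpleGraph.mem_edgeFinset, hab, SimpleGraph.mem_edgeSet] at this
        exact this
      have ha : a ∈ U := by
        simp only [hU, Finset.mem_filter, Finset.mem_univ, true_and]
        exact ⟨e0, he0, by rw [hab]; exact Sym2.mem_mk_left a b⟩
      have hb : b ∈ U := by
        simp only [hU, Finset.mem_filter, Finset.mem_univ, true_and]
        exact ⟨e0, he0, by rw [hab]; exact Sym2.mem_mk_right a b⟩
      have : ({a, b} : Finset V) ⊆ U := by
        intro x hx; simp at hx; rcases hx with rfl | rfl <;> assumption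
      calc 2 = ({a, b} : Finset V).card := by rw [Finset.card_insert_of_notMem (by simp [hadj.ne]), Finset.card_singleton]
        _ ≤ U.card := Finset.card_le_card this
    have hle : s.card ≤ (G.edgeFinset.filter (fun e => ∀ x ∈ e, x ∈ U)).card := by
      apply Finset.card_le_card_of_injOn (fun e : {e : Sym2 V // e ∈ G.edgeFinset} => (e : Sym2 V))
      · intro e he
        simp only [Finset.mem_coe, Finset.mem_filter]
        refine ⟨e.2, fun x hx => ?_⟩
        simp only [hU, Finset.mem_filter, Finset.mem_univ, true_and]
        exact ⟨e, he, hx⟩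
      · intro e _ e' _ h; exact Subtype.ext h
    calc s.card ≤ lam * (U.card - 1) := hle.trans (harb U hcard2)
      _ ≤ lam * U.card := Nat.mul_le_mul_left _ (Nat.sub_le _ _)
      _ = (s.biUnion t).card := by
          rw [hbi, Finset.card_product, Finset.card_univ, Fintype.card_fin, Nat.mul_comm]
  obtain ⟨f, hfinj, hf⟩ := (Finset.all_card_le_biUnion_card_iff_exists_injective t).1 hall
  have hf1 : ∀ e : {e : Sym2 V // e ∈ G.edgeFinset}, ((f e).1) ∈ (e : Sym2 V) := by
    intro e
    have := hf e
    simpa [ht] using this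
  have hmem : ∀ {u v : V}, G.Adj u v → s(u, v) ∈ G.edgeFinset := by
    intro u v h; rw [SimpleGraph.mem_edgeFinset, SimpleGraph.mem_edgeSet]; exact h
  refine ⟨fun u v => if h : G.Adj u v then decide ((f ⟨s(u,v), hmem h⟩).1 = u) else false,
    ?_, ?_, ?_⟩
  · intro u v huv
    dsimp only
    rw [dif_pos huv, dif_pos huv.symm]
    have he : (⟨s(v,u), hmem huv.symm⟩ : {e : Sym2 V // e ∈ G.edgeFinset})
        = ⟨s(u,v), hmem huv⟩ := Subtype.ext (Sym2.eq_swap)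
    rw [he]
    have hm := hf1 ⟨s(u,v), hmem huv⟩
    rw [Sym2.mem_iff] at hm
    rcases hm with hm | hm
    · simp [hm, huv.ne]
    · simp [hm, huv.ne']
  · intro u v h
    dsimp only at h
    by_cases hadj : G.Adj u v
    · exact hadj
    · rw [dif_neg hadj] at h; exact absurd h (by simp)
  · intro v
    set S := Finset.univ.filter (fun u =>
      (if h : G.Adj v u then decide ((f ⟨s(v,u), hmem h⟩).1 = v) else false) = true) with hS
    have hSmem : ∀ u ∈ S, ∃ h : G.Adj v u, (f ⟨s(v,u), hmem h⟩).1 = v := by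
      intro u hu
      simp only [hS, Finset.mem_filter, Finset.mem_univ, true_and] at hu
      by_cases h : G.Adj v u
      · rw [dif_pos h] at hu; exact ⟨h, of_decide_eq_true hu⟩
      · rw [dif_neg h] at hu; exact absurd hu (by simp)
    rcases S.eq_empty_or_nonempty with hSe | ⟨u0, hu0⟩
    · simp [hSe]
    · obtain ⟨h0, -⟩ := hSmem u0 hu0
      have hcard : S.card ≤ (({v} : Finset V) ×ˢ (univ : Finset (Fin lam))).card := by
        apply Finset.card_le_card_of_injOn
          (fun u => if h : G.Adj v u then f ⟨s(v,u), hmem h⟩ else f ⟨s(v,u0), hmem h0⟩)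
        · intro u hu
          obtain ⟨h, hfv⟩ := hSmem u hu
          dsimp only
          rw [dif_pos h]
          simp only [Finset.mem_coe, Finset.mem_product, Finset.mem_singleton, Finset.mem_univ, and_true]
          exact hfv
        · intro u hu u' hu' hguu
          obtain ⟨h, -⟩ := hSmem u hu
          obtain ⟨h', -⟩ := hSmem u' hu'
          simp only [dif_pos h, dif_pos h'] at hguu
          have := hfinj hguu
          have hsym : s(v, u) = s(v, u') := congrArg Subtype.val this
          exact (Sym2.congr_right).1 hsym
      calc S.card ≤ _ := hcard
        _ = lam := by rw [Finset.card_product, Finset.card_singleton, Finset.card_univ, Fintype.card_fin, Nat.one_mul]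
end

section
/- Let G be a graph with m edges and arboricity at most λ, let M be an independent set of G in which every vertex has degree at most D, and let S be a set of vertices with |S| ≥ s. Define for each y ∈ S the value r(y) = ∑_{u ∈ N(y) ∩ M} deg(u). Then there exists y ∈ S with r(y) ≤ λ·D + 2·λ·m/s. -/
open Finset in
open scoped Classical in
/-- let `G` be a graph with `m` edges admitting an orientation with
out-degree at most `λ` at every vertex (arboricity ≤ `λ`), let `M` be an independent set
in which every vertex has degree at most `D`, and let `S` be a vertex set with `|S| ≥ s`
(`s > 0`).  Writing `r(y) = ∑_{u ∈ N(y) ∩ M} deg u`, there exists `y ∈ S` with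
`r(y) ≤ λ·D + 2·λ·m/s`. -/
theorem stmt12 {V : Type*} [Fintype V] [DecidableEq V]
    (G : SimpleGraph V) [DecidableRel G.Adj] (lam D : ℕ) (m : ℕ)
    (hm : m = G.edgeFinset.card)
    (horient : ∃ r : V → V → Bool,
      (∀ u v, G.Adj u v → (r u v = !r v u)) ∧
      (∀ u v, r u v = true → G.Adj u v) ∧
      (∀ v, (Finset.univ.filter (fun u => r v u = true)).card ≤ lam))
    (M : Finset V) (hM : ∀ u ∈ M, ∀ v ∈ M, ¬ G.Adj u v)
    (hdeg : ∀ u ∈ M, G.degree u ≤ D)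
    (S : Finset V) (s : ℝ) (hs : 0 < s) (hS : s ≤ S.card) :
    ∃ y ∈ S, (∑ u ∈ G.neighborFinset y ∩ M, (G.degree u : ℝ))
      ≤ lam * D + 2 * lam * m / s := by
  obtain ⟨r, hanti, hradj, hout⟩ := horient
  -- the "in-part" of r(y)
  set F : V → ℝ := fun y =>
    ∑ u ∈ (G.neighborFinset y ∩ M).filter (fun u => r u y = true), (G.degree u : ℝ) with hF
  have hScard : (0:ℝ) < S.card := lt_of_lt_of_le hs hS
  have hSne : S.Nonempty := Finset.card_pos.mp (by exact_mod_cast hScard)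
  -- total bound on the in-part
  have hsum : ∑ y ∈ S, F y ≤ 2 * lam * m := by
    have h1 : ∑ y ∈ S, F y ≤
        ∑ y ∈ S, ∑ u ∈ M.filter (fun u => r u y = true), (G.degree u : ℝ) := by
      refine Finset.sum_le_sum fun y _ => ?_
      refine Finset.sum_le_sum_of_subset_of_nonneg ?_ (fun _ _ _ => by positivity)
      intro u hu
      simp only [Finset.mem_filter, Finset.mem_inter] at hu ⊢
      exact ⟨hu.1.2, hu.2⟩
    have h2 : ∑ y ∈ S, ∑ u ∈ M.filter (fun u => r u y = true), (G.degree u : ℝ)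
        = ∑ u ∈ M, ((S.filter (fun y => r u y = true)).card : ℝ) * (G.degree u : ℝ) := by
      simp only [Finset.sum_filter]
      rw [Finset.sum_comm]
      refine Finset.sum_congr rfl fun u _ => ?_
      rw [← Finset.sum_filter, Finset.sum_const, nsmul_eq_mul]
    have h3 : ∑ u ∈ M, ((S.filter (fun y => r u y = true)).card : ℝ) * (G.degree u : ℝ)
        ≤ ∑ u ∈ M, (lam : ℝ) * (G.degree u : ℝ) := by
      refine Finset.sum_le_sum fun u _ => ?_
      have hc : (S.filter (fun y => r u y = true)).card ≤ lam :=
        le_trans (Finset.card_le_card (fun y hy => by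
          simp only [Finset.mem_filter, Finset.mem_univ, true_and] at hy ⊢
          exact hy.2)) (hout u)
      exact mul_le_mul_of_nonneg_right (by exact_mod_cast hc) (by positivity)
    have h4 : ∑ u ∈ M, (G.degree u : ℝ) ≤ 2 * m := by
      have := G.sum_degrees_eq_twice_card_edges
      have h5 : ∑ u ∈ M, (G.degree u : ℝ) ≤ ∑ u ∈ (Finset.univ : Finset V), (G.degree u : ℝ) :=
        Finset.sum_le_sum_of_subset_of_nonneg (Finset.subset_univ M)
          (fun _ _ _ => by positivity)
      calc ∑ u ∈ M, (G.degree u : ℝ) ≤ ∑ u ∈ (Finset.univ : Finset V), (G.degree u : ℝ) := h5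
        _ = ((∑ u, G.degree u : ℕ) : ℝ) := by push_cast; ring
        _ = 2 * m := by rw [this, hm]; push_cast; ring
    calc ∑ y ∈ S, F y ≤ ∑ u ∈ M, (lam : ℝ) * (G.degree u : ℝ) := by
          rw [← h2] at h3; exact le_trans h1 h3
      _ = (lam : ℝ) * ∑ u ∈ M, (G.degree u : ℝ) := by rw [Finset.mul_sum]
      _ ≤ (lam : ℝ) * (2 * m) := by
          exact mul_le_mul_of_nonneg_left h4 (by positivity)
      _ = 2 * lam * m := by ring
  -- average: find y with small F y
  have havg : ∃ y ∈ S, F y ≤ 2 * lam * m / S.card := by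
    refine Finset.exists_le_of_sum_le hSne ?_
    rw [Finset.sum_const, nsmul_eq_mul, mul_div_cancel₀ _ (ne_of_gt hScard)]
    exact hsum
  obtain ⟨y, hyS, hFy⟩ := havg
  refine ⟨y, hyS, ?_⟩
  -- split r(y) into out-part and in-part
  have hsplit : (∑ u ∈ G.neighborFinset y ∩ M, (G.degree u : ℝ))
      = (∑ u ∈ (G.neighborFinset y ∩ M).filter (fun u => r y u = true), (G.degree u : ℝ))
        + (∑ u ∈ (G.neighborFinset y ∩ M).filter (fun u => ¬ (r y u = true)),
            (G.degree u : ℝ)) :=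
    (Finset.sum_filter_add_sum_filter_not _ _ _).symm
  have hin : (∑ u ∈ (G.neighborFinset y ∩ M).filter (fun u => ¬ (r y u = true)),
      (G.degree u : ℝ)) ≤ F y := by
    refine Finset.sum_le_sum_of_subset_of_nonneg ?_ (fun _ _ _ => by positivity)
    intro u hu
    simp only [Finset.mem_filter, Finset.mem_inter, SimpleGraph.mem_neighborFinset] at hu ⊢
    refine ⟨hu.1, ?_⟩
    have hadj : G.Adj y u := hu.1.1
    have := hanti y u hadj
    rcases Bool.eq_false_or_eq_true (r u y) with h | h
    · exact h
    · exact absurd (by simp [this, h] : r y u = true) hu.2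
  have hout' : (∑ u ∈ (G.neighborFinset y ∩ M).filter (fun u => r y u = true),
      (G.degree u : ℝ)) ≤ lam * D := by
    have hcard : ((G.neighborFinset y ∩ M).filter (fun u => r y u = true)).card ≤ lam :=
      le_trans (Finset.card_le_card (fun u hu => by
        simp only [Finset.mem_filter, Finset.mem_univ, true_and] at hu ⊢
        exact hu.2)) (hout y)
    calc (∑ u ∈ (G.neighborFinset y ∩ M).filter (fun u => r y u = true), (G.degree u : ℝ))
        ≤ ∑ _u ∈ (G.neighborFinset y ∩ M).filter (fun u => r y u = true), (D : ℝ) := by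
          refine Finset.sum_le_sum fun u hu => ?_
          simp only [Finset.mem_filter, Finset.mem_inter] at hu
          exact_mod_cast hdeg u hu.1.2
      _ = (((G.neighborFinset y ∩ M).filter (fun u => r y u = true)).card : ℝ) * D := by
          rw [Finset.sum_const, nsmul_eq_mul]
      _ ≤ (lam : ℝ) * D := by
          exact mul_le_mul_of_nonneg_right (by exact_mod_cast hcard) (by positivity)
  have hdiv : 2 * (lam:ℝ) * m / S.card ≤ 2 * lam * m / s :=
    div_le_div_of_nonneg_left (by positivity) hs hS
  calc (∑ u ∈ G.neighborFinset y ∩ M, (G.degree u : ℝ))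
      ≤ (lam : ℝ) * D + F y := by rw [hsplit]; exact add_le_add hout' hin
    _ ≤ (lam : ℝ) * D + 2 * lam * m / S.card := by linarith
    _ ≤ (lam : ℝ) * D + 2 * lam * m / s := by linarith
end

section
/- Let G be a graph with m edges and let K ⊆ V be a set of vertices each having at least 8T neighbors outside some fixed set W (where K ⊆ W). For each vertex u ∉ W adjacent to K, define unitcost(u) = deg(u)/|N(u) ∩ K|. For v ∈ K, let p(v) be the median of the multiset {unitcost(u) : u ∈ N(v) \ W}. Then ∑_{v ∈ K} p(v) ≤ m/(2T), and consequently at least half the vertices v ∈ K satisfy p(v) ≤ m/(|K|·T). -/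
open Finset in
open scoped Classical in
/-- let `G` be a graph with `m` edges, `K ⊆ W` sets of vertices such that
every `v ∈ K` has at least `8T` neighbors outside `W` (`T > 0`).  For `u ∉ W` define
`unitcost u = deg u / |N(u) ∩ K|`, and for `v ∈ K` let `p v` be a (nonnegative) median of
the multiset `{unitcost u : u ∈ N(v) \ W}`: at most half the elements are `< p v` and at
most half are `> p v`.  Then `∑_{v ∈ K} p v ≤ m/(2T)`, and consequently at least half the
vertices `v ∈ K` satisfy `p v ≤ m/(|K|·T)`. -/
theorem stmt13 {V : Type*} [Fintype V] [DecidableEq V]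
    (G : SimpleGraph V) [DecidableRel G.Adj] (m : ℕ) (hm : m = G.edgeFinset.card)
    (W K : Finset V) (hKW : K ⊆ W) (T : ℝ) (hT : 0 < T)
    (hbig : ∀ v ∈ K, 8 * T ≤ ((G.neighborFinset v \ W).card : ℝ))
    (unitcost : V → ℝ)
    (hunit : ∀ u : V, u ∉ W →
      unitcost u = (G.degree u : ℝ) / ((G.neighborFinset u ∩ K).card : ℝ))
    (p : V → ℝ) (hp0 : ∀ v ∈ K, 0 ≤ p v)
    (hmed : ∀ v ∈ K,
      2 * ((G.neighborFinset v \ W).filter (fun u => unitcost u < p v)).card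
          ≤ (G.neighborFinset v \ W).card ∧
      2 * ((G.neighborFinset v \ W).filter (fun u => p v < unitcost u)).card
          ≤ (G.neighborFinset v \ W).card) :
    (∑ v ∈ K, p v) ≤ m / (2 * T)
    ∧ K.card ≤ 2 * (K.filter (fun v => p v ≤ (m : ℝ) / (K.card * T))).card := by
  classical
  set A : V → Finset V := fun v =>
    (G.neighborFinset v \ W).filter (fun u => ¬ unitcost u < p v) with hA
  have hunit0 : ∀ u, u ∉ W → 0 ≤ unitcost u := by
    intro u hu; rw [hunit u hu]; positivity
  -- |A v| is at least half of |N v \ W|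
  have hAcard : ∀ v ∈ K, 4 * T ≤ ((A v).card : ℝ) := by
    intro v hv
    have h1 := (hmed v hv).1
    have hsplit := Finset.card_filter_add_card_filter_not
      (s := G.neighborFinset v \ W) (p := fun u => unitcost u < p v)
    have hb := hbig v hv
    have h2 : (G.neighborFinset v \ W).card ≤ 2 * (A v).card := by
      simp only [hA] at *
      omega
    have : ((G.neighborFinset v \ W).card : ℝ) ≤ 2 * ((A v).card : ℝ) := by
      exact_mod_cast h2
    linarith
  -- pointwise: 4T * p v ≤ sum of unitcost over A v
  have hpt : ∀ v ∈ K, 4 * T * p v ≤ ∑ u ∈ A v, unitcost u := by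
    intro v hv
    have h1 : 4 * T * p v ≤ ((A v).card : ℝ) * p v :=
      mul_le_mul_of_nonneg_right (hAcard v hv) (hp0 v hv)
    have h2 : ((A v).card : ℝ) * p v ≤ ∑ u ∈ A v, unitcost u := by
      rw [← nsmul_eq_mul]
      apply Finset.card_nsmul_le_sum
      intro u hu
      exact not_lt.mp (Finset.mem_filter.mp hu).2
    calc 4 * T * p v ≤ ((A v).card : ℝ) * p v := h1
      _ ≤ _ := h2
  -- double counting
  have hswap : ∑ v ∈ K, ∑ u ∈ A v, unitcost u ≤ 2 * (m : ℝ) := by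
    have e1 : ∑ v ∈ K, ∑ u ∈ A v, unitcost u
        = ∑ u : V, ∑ v ∈ K, (if u ∈ A v then unitcost u else 0) := by
      rw [Finset.sum_comm]
      apply Finset.sum_congr rfl
      intro v _
      rw [Finset.sum_ite_mem, Finset.univ_inter]
    have e2 : ∀ u : V, ∑ v ∈ K, (if u ∈ A v then unitcost u else 0)
        ≤ (G.degree u : ℝ) := by
      intro u
      rw [Finset.sum_ite, Finset.sum_const_zero, add_zero, Finset.sum_const,
        nsmul_eq_mul]
      set c := (K.filter (fun v => u ∈ A v)).card with hc
      rcases Nat.eq_zero_or_pos c with h0 | hpos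
      · rw [h0]; simp
      · obtain ⟨v, hvmem⟩ := Finset.card_pos.mp hpos
        have hvK := (Finset.mem_filter.mp hvmem).1
        have huA := (Finset.mem_filter.mp hvmem).2
        have huNW : u ∈ G.neighborFinset v \ W := (Finset.mem_filter.mp huA).1
        have huW : u ∉ W := (Finset.mem_sdiff.mp huNW).2
        have hsub : K.filter (fun v => u ∈ A v) ⊆ G.neighborFinset u ∩ K := by
          intro w hw
          have hwK := (Finset.mem_filter.mp hw).1
          have hwA := (Finset.mem_filter.mp hw).2
          have : u ∈ G.neighborFinset w \ W := (Finset.mem_filter.mp hwA).1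
          have hadj : G.Adj w u := by
            have := (Finset.mem_sdiff.mp this).1
            rwa [SimpleGraph.mem_neighborFinset] at this
          exact Finset.mem_inter.mpr
            ⟨by rw [SimpleGraph.mem_neighborFinset]; exact hadj.symm, hwK⟩
        set d := (G.neighborFinset u ∩ K).card with hd
        have hcd : c ≤ d := Finset.card_le_card hsub
        have hdpos : 0 < d := lt_of_lt_of_le hpos hcd
        rw [hunit u huW, ← hd]
        have hdne : (d : ℝ) ≠ 0 := by positivity
        rw [div_eq_mul_inv]
        have : (c : ℝ) * ((G.degree u : ℝ) * (d : ℝ)⁻¹)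
            ≤ (d : ℝ) * ((G.degree u : ℝ) * (d : ℝ)⁻¹) := by
          apply mul_le_mul_of_nonneg_right (by exact_mod_cast hcd)
          positivity
        calc (c : ℝ) * ((G.degree u : ℝ) * (d : ℝ)⁻¹)
            ≤ (d : ℝ) * ((G.degree u : ℝ) * (d : ℝ)⁻¹) := this
          _ = (G.degree u : ℝ) := by field_simp
    have e3 : ∑ u : V, (G.degree u : ℝ) = 2 * (m : ℝ) := by
      have h := SimpleGraph.sum_degrees_eq_twice_card_edges G
      rw [hm]
      exact_mod_cast congrArg (Nat.cast : ℕ → ℝ) h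
    calc ∑ v ∈ K, ∑ u ∈ A v, unitcost u
        = ∑ u : V, ∑ v ∈ K, (if u ∈ A v then unitcost u else 0) := e1
      _ ≤ ∑ u : V, (G.degree u : ℝ) := Finset.sum_le_sum (fun u _ => e2 u)
      _ = 2 * (m : ℝ) := e3
  have key : 4 * T * ∑ v ∈ K, p v ≤ 2 * (m : ℝ) := by
    calc 4 * T * ∑ v ∈ K, p v = ∑ v ∈ K, 4 * T * p v := by rw [Finset.mul_sum]
      _ ≤ ∑ v ∈ K, ∑ u ∈ A v, unitcost u := Finset.sum_le_sum hpt
      _ ≤ 2 * (m : ℝ) := hswap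
  have part1 : (∑ v ∈ K, p v) ≤ (m : ℝ) / (2 * T) := by
    rw [le_div_iff₀ (by positivity)]
    nlinarith
  refine ⟨part1, ?_⟩
  -- Markov part
  set c : ℝ := (m : ℝ) / (K.card * T) with hcdef
  set F := K.filter (fun v => p v ≤ c) with hF
  set B := K.filter (fun v => ¬ p v ≤ c) with hB
  have hFB : F.card + B.card = K.card :=
    Finset.card_filter_add_card_filter_not (p := fun v => p v ≤ c)
  rcases Nat.eq_zero_or_pos K.card with hK0 | hKpos
  · omega
  have hsumB : (B.card : ℝ) * c ≤ (m : ℝ) / (2 * T) := by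
    have h1 : (B.card : ℝ) * c ≤ ∑ v ∈ B, p v := by
      rw [← nsmul_eq_mul]
      apply Finset.card_nsmul_le_sum
      intro v hv
      exact le_of_lt (not_le.mp (Finset.mem_filter.mp hv).2)
    have h2 : ∑ v ∈ B, p v ≤ ∑ v ∈ K, p v := by
      apply Finset.sum_le_sum_of_subset_of_nonneg (Finset.filter_subset _ _)
      intro v hv _
      exact hp0 v hv
    linarith
  have h2B : 2 * B.card ≤ K.card := by
    rcases Nat.eq_zero_or_pos m with hm0 | hmpos
    · -- m = 0: every p v = 0 on K, so B is empty
      have hBempty : B = ∅ := by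
        rw [Finset.eq_empty_iff_forall_notMem]
        intro v hv
        have hvK := (Finset.mem_filter.mp hv).1
        have hvgt := not_le.mp (Finset.mem_filter.mp hv).2
        have hc0 : c = 0 := by rw [hcdef, hm0]; simp
        have hsum0 : ∑ v ∈ K, p v ≤ 0 := by
          have : ((m : ℝ) / (2 * T)) = 0 := by rw [hm0]; simp
          linarith [part1]
        have : p v = 0 := by
          have hle := Finset.single_le_sum (f := p) (fun i hi => hp0 i hi) hvK
          have := hp0 v hvK
          linarith
        rw [hc0] at hvgt; linarith
      rw [hBempty]; simp
    · have hcpos : 0 < c := by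
        rw [hcdef]
        apply div_pos (by exact_mod_cast hmpos)
        positivity
      have hKc : (0:ℝ) < (K.card : ℝ) := by exact_mod_cast hKpos
      have hmR : (0:ℝ) < (m : ℝ) := by exact_mod_cast hmpos
      have : (B.card : ℝ) * ((m : ℝ) / ((K.card : ℝ) * T)) ≤ (m : ℝ) / (2 * T) := by
        rw [hcdef] at hsumB; exact_mod_cast hsumB
      have h2 : 2 * (B.card : ℝ) ≤ (K.card : ℝ) := by
        rw [mul_div_assoc'] at this
        rw [div_le_div_iff₀ (by positivity) (by positivity)] at this
        nlinarith [mul_pos hmR hT]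
      exact_mod_cast h2
  omega
end
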